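/- arXiv:1808.06160 — 5 statements merged into one kernel-verified Lean document; each statement's English description precedes it below -/
import Mathlib

section
/- For every integer n ≥ 4, the 4-component connectivity of the n-dimensional alternating group network satisfies κ₄(AN_n) ≤ 3n − 6; that is, there exists a set F of 3n − 6 vertices of AN_n whose removal leaves a graph with at least 4 connected components. -/
open SimpleGraph

/-- Vertices of the alternating group network: even permutations of `{1,…,n}`
(modeled as permutations of `Fin n` with sign `1`). A permutation `p` is viewed
as the sequence `p₁p₂⋯p_n` where `p_j` (the symbol in position `j`) is `p ⟨j-1,_⟩`. -/
abbrev ANVertex (n : ℕ) : Type := {p : Equiv.Perm (Fin n) // Equiv.Perm.sign p = 1}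

/-- The adjacency relation of the `n`-dimensional alternating group network `AN_n`
(positions are 1-based in the informal description; position `j` is `⟨j-1,_⟩ : Fin n`). -/
def ANAdj (n : ℕ) (p q : Equiv.Perm (Fin n)) : Prop :=
  ∃ hn : 3 ≤ n,
    ((p ⟨0, by omega⟩ = q ⟨1, by omega⟩ ∧ p ⟨1, by omega⟩ = q ⟨2, by omega⟩ ∧
      p ⟨2, by omega⟩ = q ⟨0, by omega⟩ ∧ ∀ j : Fin n, 3 ≤ (j : ℕ) → p j = q j) ∨
     (p ⟨0, by omega⟩ = q ⟨2, by omega⟩ ∧ p ⟨1, by omega⟩ = q ⟨0, by omega⟩ ∧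
      p ⟨2, by omega⟩ = q ⟨1, by omega⟩ ∧ ∀ j : Fin n, 3 ≤ (j : ℕ) → p j = q j) ∨
     (∃ i : Fin n, 3 ≤ (i : ℕ) ∧ p ⟨0, by omega⟩ = q ⟨1, by omega⟩ ∧
      p ⟨1, by omega⟩ = q ⟨0, by omega⟩ ∧ p ⟨2, by omega⟩ = q i ∧ p i = q ⟨2, by omega⟩ ∧
      ∀ j : Fin n, 3 ≤ (j : ℕ) → j ≠ i → p j = q j))

/-- The `n`-dimensional alternating group network `AN_n`. -/
def AN (n : ℕ) : SimpleGraph (ANVertex n) where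
  Adj x y := ANAdj n x.1 y.1
  symm := by
    constructor
    rintro x y ⟨hn, h⟩
    refine ⟨hn, ?_⟩
    rcases h with ⟨h1, h2, h3, h4⟩ | ⟨h1, h2, h3, h4⟩ | ⟨i, hi, h1, h2, h3, h4, h5⟩
    · exact Or.inr (Or.inl ⟨h3.symm, h1.symm, h2.symm, fun j hj => (h4 j hj).symm⟩)
    · exact Or.inl ⟨h2.symm, h3.symm, h1.symm, fun j hj => (h4 j hj).symm⟩
    · exact Or.inr (Or.inr ⟨i, hi, h2.symm, h1.symm, h4.symm, h3.symm,
        fun j hj hji => (h5 j hj hji).symm⟩)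
  loopless := by
    constructor
    rintro x ⟨hn, ⟨h1, -⟩ | ⟨h1, -⟩ | ⟨i, hi, h1, -⟩⟩ <;>
      simpa [Fin.ext_iff] using x.1.injective h1

/-- The `ℓ`-component connectivity `κ_ℓ(G)`: the minimum number of vertices whose
removal from `G` results in a graph with at least `ℓ` connected components or a
graph with fewer than `ℓ` vertices. -/
noncomputable def componentConnectivity {V : Type*} [Fintype V] (G : SimpleGraph V)
    (l : ℕ) : ℕ :=
  sInf {k | ∃ F : Finset V, F.card = k ∧
    (l ≤ Nat.card ((G.induce (↑F : Set V)ᶜ).ConnectedComponent) ∨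
     Fintype.card V - F.card < l)}

/-!
`AN_n` is the Cayley graph of the alternating group for right multiplication by the generators
`σ`, `σ⁻¹` and `τᵢ = (0 1)(2 i)` (`i ≥ 3`; positions are `0`-based), so it is `(n - 1)`-regular.
The product `ρ = τ₃σ` is the 3-cycle `(0 3 2)` and is not a generator, so the cyclic
group `{1, ρ, ρ⁻¹}` is an independent set. Consecutive vertices `a`, `aρ` of this
triangle have the common neighbour `aτ₃ = aρσ⁻¹`, so the three neighbourhoods cover at most
`3(n - 1) - 3 = 3n - 6` vertices. Deleting them, padded to exactly `3n - 6` vertices, isolates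
`1`, `ρ`, `ρ⁻¹`, and since `|AN_n| = n!/2 ≥ 3n` some other vertex survives in a fourth component.
-/

open scoped Finset

theorem Finset.card_union_union_add_three_le {α : Type*} [DecidableEq α] {A B C : Finset α}
    {x y z : α} (hx : x ∈ A ∩ B) (hy : y ∈ A ∩ C) (hz : z ∈ B ∩ C) (hyz : y ≠ z) :
    #(A ∪ (B ∪ C)) + 3 ≤ #A + #B + #C := by
  have hAB : 1 ≤ #(A ∩ B) := Finset.card_pos.2 ⟨x, hx⟩
  have hABC : 2 ≤ #((A ∪ B) ∩ C) := by
    rw [← Finset.card_pair hyz]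
    refine Finset.card_le_card (Finset.insert_subset_iff.2 ⟨?_, Finset.singleton_subset_iff.2 ?_⟩)
    · rw [Finset.mem_inter] at hy ⊢
      exact ⟨Finset.mem_union_left _ hy.1, hy.2⟩
    · rw [Finset.mem_inter] at hz ⊢
      exact ⟨Finset.mem_union_right _ hz.1, hz.2⟩
  have h₁ := Finset.card_union_add_card_inter A B
  have h₂ := Finset.card_union_add_card_inter (A ∪ B) C
  rw [← Finset.union_assoc]
  omega

namespace SimpleGraph

variable {V : Type*} {G : SimpleGraph V}

theorem eq_of_reachable_induce_compl {F : Set V} {a b : ↥Fᶜ} (ha : G.neighborSet a ⊆ F)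
    (hab : (G.induce Fᶜ).Reachable a b) : a = b := by
  obtain ⟨_ | @⟨_, c, _, hadj, _⟩⟩ := hab
  · rfl
  · exact absurd (ha hadj) c.2

theorem card_add_one_le_card_connectedComponent_induce_compl [Finite V] {F : Set V}
    {S : Finset V} (hSF : ∀ s ∈ S, s ∉ F) (hS : ∀ s ∈ S, G.neighborSet s ⊆ F) {z : V}
    (hzF : z ∉ F) (hzS : z ∉ S) :
    #S + 1 ≤ Nat.card (G.induce Fᶜ).ConnectedComponent := by
  classical
  have hT : ∀ t ∈ insert z S, t ∈ Fᶜ := by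
    simp only [Finset.forall_mem_insert]
    exact ⟨hzF, hSF⟩
  let f : ↥(insert z S) → (G.induce Fᶜ).ConnectedComponent :=
    fun t => (G.induce Fᶜ).connectedComponentMk ⟨t, hT t t.2⟩
  have hf : Function.Injective f := by
    rintro ⟨a, ha⟩ ⟨b, hb⟩ hab
    have hreach := ConnectedComponent.exact hab
    rw [Subtype.mk.injEq]
    rcases Finset.mem_insert.1 ha with rfl | ha
    · rcases Finset.mem_insert.1 hb with rfl | hb
      · rfl
      · exact congrArg Subtype.val (eq_of_reachable_induce_compl (hS b hb) hreach.symm).symm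
    · exact congrArg Subtype.val (eq_of_reachable_induce_compl (hS a ha) hreach)
  have := Nat.card_le_card_of_injective f hf
  rwa [Nat.card_eq_fintype_card, Fintype.card_coe, Finset.card_insert_of_notMem hzS] at this

theorem exists_card_eq_card_add_one_le_card_connectedComponent_induce_compl [Fintype V]
    [DecidableEq V] [DecidableRel G.Adj] {S : Finset V} (hS : G.IsIndepSet S) {k : ℕ}
    (hk : #(S.biUnion fun s => G.neighborFinset s) ≤ k) (hkV : k + #S + 1 ≤ Fintype.card V) :
    ∃ F : Finset V, #F = k ∧ #S + 1 ≤ Nat.card (G.induce (↑F : Set V)ᶜ).ConnectedComponent := by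
  have hNS : (S.biUnion fun s => G.neighborFinset s) ⊆ Sᶜ := by
    intro t ht
    rw [Finset.mem_compl]
    intro hts
    obtain ⟨s, hs, hst⟩ := Finset.mem_biUnion.1 ht
    rw [mem_neighborFinset] at hst
    exact hS hs hts hst.ne hst
  obtain ⟨F, hNF, hFS, hF⟩ := Finset.exists_subsuperset_card_eq hNS hk
    (by rw [Finset.card_compl]; omega)
  obtain ⟨z, -, hz⟩ := Finset.exists_mem_notMem_of_card_lt_card (s := F ∪ S) (t := Finset.univ)
    (by have := Finset.card_union_le F S; rw [Finset.card_univ]; omega)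
  refine ⟨F, hF, card_add_one_le_card_connectedComponent_induce_compl
    (fun s hs hsF => Finset.mem_compl.1 (hFS hsF) hs) (fun s hs t hst => hNF ?_)
    (fun hzF => hz (Finset.mem_union_left _ hzF)) (fun hzS => hz (Finset.mem_union_right _ hzS))⟩
  exact Finset.mem_biUnion.2 ⟨s, hs, (mem_neighborFinset _ _ _).2 hst⟩

theorem card_biUnion_neighborFinset_le [Fintype V] [DecidableEq V] [DecidableRel G.Adj]
    {d : ℕ} (hd : ∀ a, G.degree a ≤ d) {u v w x y z : V} (hux : G.Adj u x) (hvx : G.Adj v x)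
    (huy : G.Adj u y) (hwy : G.Adj w y) (hvz : G.Adj v z) (hwz : G.Adj w z) (hyz : y ≠ z) :
    #(({u, v, w} : Finset V).biUnion fun s => G.neighborFinset s) ≤ 3 * d - 3 := by
  rw [Finset.biUnion_insert, Finset.biUnion_insert, Finset.singleton_biUnion]
  have := Finset.card_union_union_add_three_le (x := x) (y := y) (z := z) (A := G.neighborFinset u)
    (B := G.neighborFinset v) (C := G.neighborFinset w) (by simp [hux, hvx])
    (by simp [huy, hwy]) (by simp [hvz, hwz]) hyz
  simp only [card_neighborFinset_eq_degree] at this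
  have := hd u; have := hd v; have := hd w
  omega

end SimpleGraph

namespace AN

open Equiv

variable {n : ℕ}

def sigma (hn : 3 ≤ n) : Perm (Fin n) :=
  swap ⟨0, by omega⟩ ⟨2, by omega⟩ * swap ⟨2, by omega⟩ ⟨1, by omega⟩

def tau (hn : 3 ≤ n) (i : Fin n) : Perm (Fin n) :=
  swap ⟨0, by omega⟩ ⟨1, by omega⟩ * swap ⟨2, by omega⟩ i

lemma sign_sigma (hn : 3 ≤ n) : Perm.sign (sigma hn) = 1 := by
  simp [sigma, Fin.ext_iff]

lemma sign_tau (hn : 3 ≤ n) {i : Fin n} (hi : 3 ≤ (i : ℕ)) : Perm.sign (tau hn i) = 1 := by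
  rw [tau, map_mul, Perm.sign_swap (by simp [Fin.ext_iff]),
    Perm.sign_swap (by simp [Fin.ext_iff]; omega)]
  rfl

section Values

variable (hn : 3 ≤ n)

@[simp] lemma sigma_apply_zero : sigma hn ⟨0, by omega⟩ = ⟨2, by omega⟩ := by
  simp only [sigma, Perm.mul_apply, swap_apply_def]
  grind [Fin.ext_iff]

@[simp] lemma sigma_apply_one : sigma hn ⟨1, by omega⟩ = ⟨0, by omega⟩ := by
  simp only [sigma, Perm.mul_apply, swap_apply_def]
  grind [Fin.ext_iff]

@[simp] lemma sigma_apply_two : sigma hn ⟨2, by omega⟩ = ⟨1, by omega⟩ := by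
  simp only [sigma, Perm.mul_apply, swap_apply_def]
  grind [Fin.ext_iff]

lemma sigma_apply_of_three_le {j : Fin n} (hj : 3 ≤ (j : ℕ)) : sigma hn j = j := by
  simp only [sigma, Perm.mul_apply, swap_apply_def]
  grind [Fin.ext_iff]

@[simp] lemma sigma_inv_apply_zero : (sigma hn)⁻¹ ⟨0, by omega⟩ = ⟨1, by omega⟩ :=
  Perm.inv_eq_iff_eq.2 (sigma_apply_one hn).symm

@[simp] lemma sigma_inv_apply_one : (sigma hn)⁻¹ ⟨1, by omega⟩ = ⟨2, by omega⟩ :=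
  Perm.inv_eq_iff_eq.2 (sigma_apply_two hn).symm

@[simp] lemma sigma_inv_apply_two : (sigma hn)⁻¹ ⟨2, by omega⟩ = ⟨0, by omega⟩ :=
  Perm.inv_eq_iff_eq.2 (sigma_apply_zero hn).symm

lemma sigma_inv_apply_of_three_le {j : Fin n} (hj : 3 ≤ (j : ℕ)) : (sigma hn)⁻¹ j = j :=
  Perm.inv_eq_iff_eq.2 (sigma_apply_of_three_le hn hj).symm

variable {i : Fin n}

lemma tau_apply_zero (hi : 3 ≤ (i : ℕ)) : tau hn i ⟨0, by omega⟩ = ⟨1, by omega⟩ := by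
  simp only [tau, Perm.mul_apply, swap_apply_def]
  grind [Fin.ext_iff]

lemma tau_apply_one (hi : 3 ≤ (i : ℕ)) : tau hn i ⟨1, by omega⟩ = ⟨0, by omega⟩ := by
  simp only [tau, Perm.mul_apply, swap_apply_def]
  grind [Fin.ext_iff]

lemma tau_apply_two (hi : 3 ≤ (i : ℕ)) : tau hn i ⟨2, by omega⟩ = i := by
  simp only [tau, Perm.mul_apply, swap_apply_def]
  grind [Fin.ext_iff]

lemma tau_apply_self : tau hn i i = ⟨2, by omega⟩ := by
  simp only [tau, Perm.mul_apply, swap_apply_def]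
  grind [Fin.ext_iff]

lemma tau_apply_of_ne {j : Fin n} (hj : 3 ≤ (j : ℕ)) (hji : j ≠ i) : tau hn i j = j := by
  simp only [tau, Perm.mul_apply, swap_apply_def]
  grind [Fin.ext_iff]

end Values

lemma forall_fin_iff (hn : 3 ≤ n) {P : Fin n → Prop} :
    (∀ j, P j) ↔ P ⟨0, by omega⟩ ∧ P ⟨1, by omega⟩ ∧ P ⟨2, by omega⟩ ∧
      ∀ j : Fin n, 3 ≤ (j : ℕ) → P j := by
  refine ⟨fun h => ⟨h _, h _, h _, fun j _ => h j⟩, fun ⟨h₀, h₁, h₂, h₃⟩ j => ?_⟩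
  obtain ⟨_ | _ | _ | j, hj⟩ := j
  exacts [h₀, h₁, h₂, h₃ _ (by simp)]

lemma eq_mul_iff_forall {α : Type*} {p q g : Perm α} : q = p * g ↔ ∀ j, p (g j) = q j := by
  simp [Equiv.ext_iff, eq_comm]

lemma eq_mul_sigma_iff (hn : 3 ≤ n) {p q : Perm (Fin n)} :
    q = p * sigma hn ↔ p ⟨0, by omega⟩ = q ⟨1, by omega⟩ ∧ p ⟨1, by omega⟩ = q ⟨2, by omega⟩ ∧
      p ⟨2, by omega⟩ = q ⟨0, by omega⟩ ∧ ∀ j : Fin n, 3 ≤ (j : ℕ) → p j = q j := by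
  rw [eq_mul_iff_forall, forall_fin_iff hn]
  simp +contextual only [sigma_apply_zero, sigma_apply_one, sigma_apply_two,
    sigma_apply_of_three_le]
  tauto

lemma eq_mul_sigma_inv_iff (hn : 3 ≤ n) {p q : Perm (Fin n)} :
    q = p * (sigma hn)⁻¹ ↔ p ⟨0, by omega⟩ = q ⟨2, by omega⟩ ∧ p ⟨1, by omega⟩ = q ⟨0, by omega⟩ ∧
      p ⟨2, by omega⟩ = q ⟨1, by omega⟩ ∧ ∀ j : Fin n, 3 ≤ (j : ℕ) → p j = q j := by
  rw [eq_mul_iff_forall, forall_fin_iff hn]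
  simp +contextual only [sigma_inv_apply_zero, sigma_inv_apply_one, sigma_inv_apply_two,
    sigma_inv_apply_of_three_le]
  tauto

lemma eq_mul_tau_iff (hn : 3 ≤ n) {i : Fin n} (hi : 3 ≤ (i : ℕ)) {p q : Perm (Fin n)} :
    q = p * tau hn i ↔ p ⟨0, by omega⟩ = q ⟨1, by omega⟩ ∧ p ⟨1, by omega⟩ = q ⟨0, by omega⟩ ∧
      p ⟨2, by omega⟩ = q i ∧ p i = q ⟨2, by omega⟩ ∧
      ∀ j : Fin n, 3 ≤ (j : ℕ) → j ≠ i → p j = q j := by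
  have hhigh : (∀ j : Fin n, 3 ≤ (j : ℕ) → p (tau hn i j) = q j) ↔
      p ⟨2, by omega⟩ = q i ∧ ∀ j : Fin n, 3 ≤ (j : ℕ) → j ≠ i → p j = q j := by
    refine ⟨fun h => ⟨by simpa [tau_apply_self hn] using h i hi, fun j hj hji => ?_⟩,
      fun ⟨h₂, h⟩ j hj => ?_⟩
    · simpa [tau_apply_of_ne hn hj hji] using h j hj
    · obtain rfl | hji := eq_or_ne j i
      · simpa [tau_apply_self hn] using h₂
      · simpa [tau_apply_of_ne hn hj hji] using h j hj hji
  rw [eq_mul_iff_forall, forall_fin_iff hn, hhigh, tau_apply_zero hn hi, tau_apply_one hn hi,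
    tau_apply_two hn hi]
  tauto

theorem ANAdj_iff (hn : 3 ≤ n) {p q : Perm (Fin n)} :
    ANAdj n p q ↔ q = p * sigma hn ∨ q = p * (sigma hn)⁻¹ ∨
      ∃ i : Fin n, 3 ≤ (i : ℕ) ∧ q = p * tau hn i := by
  rw [eq_mul_sigma_iff, eq_mul_sigma_inv_iff,
    exists_congr fun i => and_congr_right fun hi => eq_mul_tau_iff hn hi]
  exact ⟨fun ⟨_, h⟩ => h, fun h => ⟨hn, h⟩⟩

def generators (hn : 3 ≤ n) : Finset (Perm (Fin n)) :=
  {sigma hn, (sigma hn)⁻¹} ∪ (Finset.univ.filter fun i : Fin n => 3 ≤ (i : ℕ)).image (tau hn)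

lemma mem_generators (hn : 3 ≤ n) {g : Perm (Fin n)} :
    g ∈ generators hn ↔
      g = sigma hn ∨ g = (sigma hn)⁻¹ ∨ ∃ i : Fin n, 3 ≤ (i : ℕ) ∧ g = tau hn i := by
  simp [generators, eq_comm]

lemma sigma_inv_mem_generators (hn : 3 ≤ n) : (sigma hn)⁻¹ ∈ generators hn :=
  (mem_generators hn).2 (Or.inr (Or.inl rfl))

lemma tau_mem_generators (hn : 3 ≤ n) {i : Fin n} (hi : 3 ≤ (i : ℕ)) : tau hn i ∈ generators hn :=
  (mem_generators hn).2 (Or.inr (Or.inr ⟨i, hi, rfl⟩))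

theorem ANAdj_iff_inv_mul_mem (hn : 3 ≤ n) {p q : Perm (Fin n)} :
    ANAdj n p q ↔ p⁻¹ * q ∈ generators hn := by
  simp only [ANAdj_iff hn, mem_generators, inv_mul_eq_iff_eq_mul]

lemma adj_mk_iff (hn : 3 ≤ n) {p q : Perm (Fin n)} (hp : Perm.sign p = 1) (hq : Perm.sign q = 1) :
    (AN n).Adj ⟨p, hp⟩ ⟨q, hq⟩ ↔ p⁻¹ * q ∈ generators hn :=
  ANAdj_iff_inv_mul_mem hn

theorem card_generators_le (hn : 3 ≤ n) : #(generators hn) ≤ n - 1 := by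
  have hlow := Finset.card_filter_add_card_filter_not (s := Finset.univ)
    fun i : Fin n => (i : ℕ) < 3
  simp only [Fin.card_filter_val_lt, not_lt, Finset.card_univ, Fintype.card_fin] at hlow
  calc #(generators hn)
      ≤ #({sigma hn, (sigma hn)⁻¹} : Finset _) +
          #(Finset.univ.filter fun i : Fin n => 3 ≤ (i : ℕ)) :=
        (Finset.card_union_le _ _).trans (Nat.add_le_add_left Finset.card_image_le _)
    _ ≤ 2 + (n - 3) := add_le_add (Finset.card_le_two) (by omega)
    _ = n - 1 := by omega

theorem degree_le (hn : 3 ≤ n) [DecidableRel (AN n).Adj] (p : ANVertex n) :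
    (AN n).degree p ≤ n - 1 := by
  rw [← SimpleGraph.card_neighborFinset_eq_degree]
  refine (Finset.card_le_card_of_injOn (fun q => p.1⁻¹ * q.1) (fun q hq => ?_) ?_).trans
    (card_generators_le hn)
  · exact (ANAdj_iff_inv_mul_mem hn).1 ((SimpleGraph.mem_neighborFinset _ _ _).1 hq)
  · intro q _ r _ h
    exact Subtype.ext (mul_left_cancel h)

theorem two_mul_card_ANVertex (hn : 2 ≤ n) : 2 * Fintype.card (ANVertex n) = n.factorial := by
  have : Nontrivial (Fin n) := Fin.nontrivial_iff_two_le.2 hn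
  rw [Fintype.card_congr (Equiv.subtypeEquivRight fun p => Perm.mem_alternatingGroup.symm),
    two_mul_card_alternatingGroup, Fintype.card_perm, Fintype.card_fin]

theorem three_mul_le_card_ANVertex (hn : 4 ≤ n) : 3 * n ≤ Fintype.card (ANVertex n) := by
  have hfac : 6 ≤ (n - 1).factorial := Nat.factorial_le (m := 3) (by omega)
  have hcard := two_mul_card_ANVertex (by omega : 2 ≤ n)
  rw [← Nat.mul_factorial_pred (by omega : n ≠ 0)] at hcard
  nlinarith

def rho (hn : 4 ≤ n) : Perm (Fin n) := tau (by omega) ⟨3, hn⟩ * sigma (by omega)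

section Rho

variable (hn : 4 ≤ n)

lemma sign_rho : Perm.sign (rho hn) = 1 := by
  rw [rho, map_mul, sign_tau _ le_rfl, sign_sigma, mul_one]

lemma rho_apply_zero : rho hn ⟨0, by omega⟩ = ⟨3, hn⟩ := by
  simp [rho, tau_apply_two]

lemma rho_apply_one : rho hn ⟨1, by omega⟩ = ⟨1, by omega⟩ := by
  simp [rho, tau_apply_zero]

lemma rho_apply_two : rho hn ⟨2, by omega⟩ = ⟨0, by omega⟩ := by
  simp [rho, tau_apply_one]

lemma rho_apply_three : rho hn ⟨3, hn⟩ = ⟨2, by omega⟩ := by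
  simp [rho, sigma_apply_of_three_le, tau_apply_self]

lemma rho_apply_of_four_le {j : Fin n} (hj : 4 ≤ (j : ℕ)) : rho hn j = j := by
  rw [rho, Perm.mul_apply, sigma_apply_of_three_le _ (by omega),
    tau_apply_of_ne _ (by omega) (by simp [Fin.ext_iff]; omega)]

lemma rho_pow_three : rho hn ^ 3 = 1 := by
  rw [Equiv.ext_iff, forall_fin_iff (by omega)]
  simp only [pow_three, Perm.mul_apply, Perm.one_apply]
  refine ⟨?_, ?_, ?_, fun j hj => ?_⟩
  · rw [rho_apply_zero, rho_apply_three, rho_apply_two]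
  · rw [rho_apply_one, rho_apply_one, rho_apply_one]
  · rw [rho_apply_two, rho_apply_zero, rho_apply_three]
  · obtain hj | hj := (Nat.le_iff_lt_or_eq.1 hj).symm
    · obtain rfl : j = ⟨3, hn⟩ := Fin.ext hj.symm
      rw [rho_apply_three, rho_apply_two, rho_apply_zero]
    · rw [rho_apply_of_four_le hn hj, rho_apply_of_four_le hn hj, rho_apply_of_four_le hn hj]

lemma rho_mul_rho : rho hn * rho hn = (rho hn)⁻¹ := by
  rw [eq_inv_iff_mul_eq_one, ← pow_three', rho_pow_three]

lemma rho_not_mem_generators : rho hn ∉ generators (by omega) := by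
  -- every generator sends position `0` to `1` or `2`, while `ρ` sends it to `3`
  intro h
  have h₀ := rho_apply_zero hn
  rcases (mem_generators _).1 h with h | h | ⟨i, hi, h⟩ <;> rw [h] at h₀
  · simp at h₀
  · simp at h₀
  · simp [tau_apply_zero _ hi] at h₀

lemma rho_inv_mul_tau : (rho hn)⁻¹ * tau (by omega) ⟨3, hn⟩ = (sigma (by omega))⁻¹ := by
  rw [rho, mul_inv_rev, inv_mul_cancel_right]

def rhoOrbit : Finset (ANVertex n) :=
  {⟨1, map_one _⟩, ⟨rho hn, sign_rho hn⟩, ⟨(rho hn)⁻¹, by rw [map_inv, sign_rho, inv_one]⟩}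

lemma rho_ne_one : rho hn ≠ 1 := fun h => by
  simpa [h] using rho_apply_zero hn

lemma rho_ne_inv : rho hn ≠ (rho hn)⁻¹ := fun h => by
  simpa [← h, rho_apply_three, rho_apply_two] using congrArg (· ⟨3, hn⟩) (inv_mul_cancel (rho hn))

lemma card_rhoOrbit : #(rhoOrbit hn) = 3 := by
  rw [rhoOrbit, Finset.card_eq_three]
  refine ⟨_, _, _, ?_, ?_, ?_, rfl⟩ <;> simp only [Ne, Subtype.mk.injEq]
  · exact (rho_ne_one hn).symm
  · exact inv_ne_one.2 (rho_ne_one hn) |>.symm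
  · exact rho_ne_inv hn

lemma not_adj_of_inv_mul_eq_rho {p q : ANVertex n} (h : p.1⁻¹ * q.1 = rho hn) :
    ¬(AN n).Adj p q :=
  fun hpq => rho_not_mem_generators hn (h ▸ (ANAdj_iff_inv_mul_mem _).1 hpq)

lemma isIndepSet_rhoOrbit : (AN n).IsIndepSet (rhoOrbit hn : Set (ANVertex n)) := by
  have hsymm : ∀ p q : ANVertex n, p.1⁻¹ * q.1 = rho hn → ¬(AN n).Adj p q ∧ ¬(AN n).Adj q p :=
    fun p q h => ⟨not_adj_of_inv_mul_eq_rho hn h, fun h' => not_adj_of_inv_mul_eq_rho hn h h'.symm⟩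
  rw [rhoOrbit, Finset.coe_insert, Finset.coe_insert, Finset.coe_singleton, isIndepSet_iff,
    Set.pairwise_insert, Set.pairwise_insert]
  simp only [Set.pairwise_singleton, Set.mem_insert_iff, Set.mem_singleton_iff,
    forall_eq_or_imp, forall_eq]
  refine ⟨⟨trivial, fun _ => hsymm _ _ ?_⟩, fun _ => hsymm _ _ ?_, fun _ => (hsymm _ _ ?_).symm⟩
  · show (rho hn)⁻¹ * (rho hn)⁻¹ = rho hn
    rw [← mul_inv_rev, rho_mul_rho, inv_inv]
  · show (1 : Perm (Fin n))⁻¹ * rho hn = rho hn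
    rw [inv_one, one_mul]
  · show (rho hn)⁻¹⁻¹ * 1 = rho hn
    rw [inv_inv, mul_one]

lemma card_biUnion_neighborFinset_rhoOrbit_le [DecidableRel (AN n).Adj] :
    #((rhoOrbit hn).biUnion fun p => (AN n).neighborFinset p) ≤ 3 * (n - 1) - 3 := by
  have h3 : 3 ≤ n := by omega
  have hτ := tau_mem_generators h3 (i := ⟨3, hn⟩) le_rfl
  have hσ := sigma_inv_mem_generators h3
  refine (AN n).card_biUnion_neighborFinset_le (degree_le h3)
    (x := ⟨tau h3 ⟨3, hn⟩, sign_tau h3 le_rfl⟩)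
    (y := ⟨(rho hn)⁻¹ * tau h3 ⟨3, hn⟩, by simp [sign_rho, sign_tau]⟩)
    (z := ⟨rho hn * tau h3 ⟨3, hn⟩, by simp [sign_rho, sign_tau]⟩) ?_ ?_ ?_ ?_ ?_ ?_ ?_
  · rwa [adj_mk_iff h3, inv_one, one_mul]
  · rwa [adj_mk_iff h3, rho_inv_mul_tau]
  · rwa [adj_mk_iff h3, inv_one, one_mul, rho_inv_mul_tau]
  · rwa [adj_mk_iff h3, inv_inv, mul_inv_cancel_left]
  · rwa [adj_mk_iff h3, inv_mul_cancel_left]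
  · rwa [adj_mk_iff h3, inv_inv, ← mul_assoc, rho_mul_rho, rho_inv_mul_tau]
  · rw [Ne, Subtype.mk.injEq, mul_left_inj]
    exact (rho_ne_inv hn).symm

end Rho

end AN

/-- For every integer `n ≥ 4`, `κ₄(AN_n) ≤ 3n − 6`; that is, there exists a set `F`
of `3n − 6` vertices of `AN_n` whose removal leaves a graph with at least `4`
connected components. -/
theorem kappa4_AN_upper (n : ℕ) (hn : 4 ≤ n) :
    componentConnectivity (AN n) 4 ≤ 3 * n - 6 ∧
    ∃ F : Finset (ANVertex n), F.card = 3 * n - 6 ∧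
      4 ≤ Nat.card (((AN n).induce (↑F : Set (ANVertex n))ᶜ).ConnectedComponent) := by
  classical
  obtain ⟨F, hF, hcomp⟩ :=
    (AN n).exists_card_eq_card_add_one_le_card_connectedComponent_induce_compl
      (AN.isIndepSet_rhoOrbit hn) (AN.card_biUnion_neighborFinset_rhoOrbit_le hn)
      (by rw [AN.card_rhoOrbit]; have := AN.three_mul_le_card_ANVertex hn; omega)
  rw [AN.card_rhoOrbit] at hcomp
  have hF' : F.card = 3 * n - 6 := by omega
  exact ⟨Nat.sInf_le ⟨F, hF', Or.inl hcomp⟩, F, hF', hcomp⟩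
end

section
/- For every integer n ≥ 4, the n-dimensional alternating group network AN_n contains no cycle of length 4; that is, there do not exist four distinct vertices v₁, v₂, v₃, v₄ of AN_n such that v₁v₂, v₂v₃, v₃v₄, and v₄v₁ are all edges of AN_n. -/
/-!
Adjacency in `AN n` is right multiplication by a generator: the 3-cycle `rot` of the positions
`0, 1, 2`, its inverse, or `swapWith i = (0 1)(2 i)` with `i ≥ 3`. A 4-cycle therefore yields a
relation `g₁ g₂ g₃ g₄ = 1` in which no two cyclically consecutive letters cancel. If some letter is
`swapWith l`, rotate the relation to make it the last one and follow the position `l` through the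
word: it cannot come back to `l`. Otherwise every letter is `rot` or `rot⁻¹`, the absence of
cancellation forces all four to be equal, and `rot ^ 4 = rot ≠ 1`.
-/

open SimpleGraph

open Equiv Equiv.Perm

namespace Fin

variable {n : ℕ}

theorem zero_ne_two : (0 : Fin (n + 3)) ≠ 2 := by simp [Fin.ext_iff, Nat.mod_eq_of_lt]

theorem one_ne_two : (1 : Fin (n + 3)) ≠ 2 := by simp [Fin.ext_iff, Nat.mod_eq_of_lt]

theorem three_le_val_iff {x : Fin (n + 3)} : 3 ≤ (x : ℕ) ↔ x ≠ 0 ∧ x ≠ 1 ∧ x ≠ 2 := by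
  constructor
  · intro hx
    refine ⟨?_, ?_, ?_⟩ <;> rintro rfl <;> simp [Nat.mod_eq_of_lt] at hx
  · rintro ⟨h0, h1, h2⟩
    rcases x with ⟨_ | _ | _ | k, hk⟩
    exacts [absurd rfl h0, absurd rfl h1, absurd rfl h2, by simp]

theorem eq_zero_or_eq_one_or_eq_two_or_three_le (x : Fin (n + 3)) :
    x = 0 ∨ x = 1 ∨ x = 2 ∨ 3 ≤ (x : ℕ) := by
  rw [three_le_val_iff]
  tauto

end Fin

theorem Equiv.Perm.IsThreeCycle.pow_four_ne_one {α : Type*} [Fintype α] [DecidableEq α]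
    {g : Perm α} (hg : IsThreeCycle g) : g ^ 4 ≠ 1 := by
  have h3 : g ^ 3 = 1 := hg.orderOf ▸ pow_orderOf_eq_one g
  rw [pow_succ, h3, one_mul]
  exact hg.ne_one

namespace AN

variable {n : ℕ}

/- Rules (i), (ii) and (iii) of `ANAdj` say `q = p * g` for `g = rot`, `rot⁻¹` and `swapWith i`
respectively, `g` acting on positions. -/
def rot : Perm (Fin (n + 3)) := swap 1 2 * swap 1 0

def swapWith (i : Fin (n + 3)) : Perm (Fin (n + 3)) := swap 0 1 * swap 2 i

def IsRotation (g : Perm (Fin (n + 3))) : Prop := g = rot ∨ g = rot⁻¹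

def IsGenerator (g : Perm (Fin (n + 3))) : Prop :=
  IsRotation g ∨ ∃ i : Fin (n + 3), 3 ≤ (i : ℕ) ∧ g = swapWith i

theorem isThreeCycle_rot : IsThreeCycle (rot : Perm (Fin (n + 3))) :=
  isThreeCycle_swap_mul_swap_same Fin.one_ne_two (by simp) Fin.zero_ne_two.symm

@[simp] theorem rot_apply_zero : (rot : Perm (Fin (n + 3))) 0 = 2 := by simp [rot]
@[simp] theorem rot_apply_one : (rot : Perm (Fin (n + 3))) 1 = 0 := by
  simp [rot, swap_apply_of_ne_of_ne, Fin.zero_ne_two]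
@[simp] theorem rot_apply_two : (rot : Perm (Fin (n + 3))) 2 = 1 := by
  simp [rot, swap_apply_of_ne_of_ne, Fin.zero_ne_two.symm, Fin.one_ne_two.symm]

theorem rot_apply_of_three_le {x : Fin (n + 3)} (hx : 3 ≤ (x : ℕ)) : rot x = x := by
  obtain ⟨h0, h1, h2⟩ := Fin.three_le_val_iff.mp hx
  simp [rot, swap_apply_of_ne_of_ne, h0, h1, h2]

section swapWith

variable {i : Fin (n + 3)}

theorem swapWith_apply_zero (hi : 3 ≤ (i : ℕ)) : swapWith i 0 = 1 := by
  obtain ⟨h0, h1, -⟩ := Fin.three_le_val_iff.mp hi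
  simp [swapWith, swap_apply_of_ne_of_ne, Fin.zero_ne_two, h0.symm]

theorem swapWith_apply_one (hi : 3 ≤ (i : ℕ)) : swapWith i 1 = 0 := by
  obtain ⟨h0, h1, -⟩ := Fin.three_le_val_iff.mp hi
  simp [swapWith, swap_apply_of_ne_of_ne, Fin.one_ne_two, h1.symm]

theorem swapWith_apply_two (hi : 3 ≤ (i : ℕ)) : swapWith i 2 = i := by
  obtain ⟨h0, h1, -⟩ := Fin.three_le_val_iff.mp hi
  simp [swapWith, swap_apply_of_ne_of_ne, h0, h1]

theorem swapWith_apply_self : swapWith i i = 2 := by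
  simp [swapWith, swap_apply_of_ne_of_ne, Fin.zero_ne_two.symm, Fin.one_ne_two.symm]

theorem swapWith_apply_of_three_le {x : Fin (n + 3)} (hx : 3 ≤ (x : ℕ))
    (hxi : x ≠ i) : swapWith i x = x := by
  obtain ⟨h0, h1, h2⟩ := Fin.three_le_val_iff.mp hx
  simp [swapWith, swap_apply_of_ne_of_ne, h0, h1, h2, hxi]

theorem swapWith_mul_self (hi : 3 ≤ (i : ℕ)) : swapWith i * swapWith i = 1 := by
  obtain ⟨h0, h1, h2⟩ := Fin.three_le_val_iff.mp hi
  have hc : Commute (swap (0 : Fin (n + 3)) 1) (swap 2 i) :=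
    (disjoint_swap_swap <| by
      simp [Fin.zero_ne_two, Fin.one_ne_two, h0.symm, h1.symm, h2.symm]).commute
  rw [swapWith, hc.symm.mul_mul_mul_comm, swap_mul_self, swap_mul_self, one_mul]

end swapWith

theorem IsRotation.isThreeCycle {g : Perm (Fin (n + 3))} (hg : IsRotation g) :
    IsThreeCycle g := by
  rcases hg with rfl | rfl
  exacts [isThreeCycle_rot, isThreeCycle_rot.inv]

theorem IsRotation.eq_of_mul_ne_one {g h : Perm (Fin (n + 3))} (hg : IsRotation g)
    (hh : IsRotation h) (hgh : g * h ≠ 1) : g = h := by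
  rcases hg with rfl | rfl <;> rcases hh with rfl | rfl <;> simp_all

theorem IsGenerator.apply_two_ne {g : Perm (Fin (n + 3))} (hg : IsGenerator g) : g 2 ≠ 2 := by
  rcases hg with (rfl | rfl) | ⟨i, hi, rfl⟩
  · simpa using Fin.one_ne_two
  · rw [Perm.inv_eq_iff_eq.mpr rot_apply_zero.symm]
    exact Fin.zero_ne_two
  · simpa [swapWith_apply_two hi] using (Fin.three_le_val_iff.mp hi).2.2

theorem IsGenerator.apply_eq_self {g : Perm (Fin (n + 3))} (hg : IsGenerator g)
    {l : Fin (n + 3)} (hl : 3 ≤ (l : ℕ)) (hgl : g ≠ swapWith l) : g l = l := by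
  rcases hg with (rfl | rfl) | ⟨i, hi, rfl⟩
  · exact rot_apply_of_three_le hl
  · exact Perm.inv_eq_iff_eq.mpr (rot_apply_of_three_le hl).symm
  · exact swapWith_apply_of_three_le hl (by rintro rfl; exact hgl rfl)

/- Follow the position `l`: `swapWith l` sends it to `2`, which `g₃` moves to a position other
than `2` and `l`; from there `g₂` cannot reach `l`, and `g₁` fixes `l`. -/
theorem mul_mul_mul_swapWith_ne_one {g₁ g₂ g₃ : Perm (Fin (n + 3))} {l : Fin (n + 3)}
    (hl : 3 ≤ (l : ℕ)) (h₁ : IsGenerator g₁) (h₂ : IsGenerator g₂) (h₃ : IsGenerator g₃)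
    (h₁l : g₁ ≠ swapWith l) (h₃l : g₃ ≠ swapWith l) : g₁ * g₂ * g₃ * swapWith l ≠ 1 := by
  intro h
  have h₂₃ : g₂ (g₃ 2) = l := g₁.injective <| by
    simpa [swapWith_apply_self, h₁.apply_eq_self hl h₁l] using congr($h l)
  have h₃₂ : g₃ 2 ≠ l := fun e =>
    (Fin.three_le_val_iff.mp hl).2.2 (g₃.injective (e.trans (h₃.apply_eq_self hl h₃l).symm)).symm
  by_cases h₂l : g₂ = swapWith l
  · subst h₂l
    exact h₃.apply_two_ne ((swapWith l).injective (h₂₃.trans (swapWith_apply_two hl).symm))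
  · exact h₃₂ (g₂.injective (h₂₃.trans (h₂.apply_eq_self hl h₂l).symm))

structure IsCyclicallyReducedRelation (g₁ g₂ g₃ g₄ : Perm (Fin (n + 3))) : Prop where
  isGenerator₁ : IsGenerator g₁
  isGenerator₂ : IsGenerator g₂
  isGenerator₃ : IsGenerator g₃
  isGenerator₄ : IsGenerator g₄
  mul_ne_one₁₂ : g₁ * g₂ ≠ 1
  mul_ne_one₂₃ : g₂ * g₃ ≠ 1
  mul_ne_one₃₄ : g₃ * g₄ ≠ 1
  mul_ne_one₄₁ : g₄ * g₁ ≠ 1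
  mul_eq_one : g₁ * g₂ * g₃ * g₄ = 1

namespace IsCyclicallyReducedRelation

variable {g₁ g₂ g₃ g₄ : Perm (Fin (n + 3))}

theorem rotate (h : IsCyclicallyReducedRelation g₁ g₂ g₃ g₄) :
    IsCyclicallyReducedRelation g₂ g₃ g₄ g₁ where
  isGenerator₁ := h.isGenerator₂
  isGenerator₂ := h.isGenerator₃
  isGenerator₃ := h.isGenerator₄
  isGenerator₄ := h.isGenerator₁
  mul_ne_one₁₂ := h.mul_ne_one₂₃
  mul_ne_one₂₃ := h.mul_ne_one₃₄
  mul_ne_one₃₄ := h.mul_ne_one₄₁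
  mul_ne_one₄₁ := h.mul_ne_one₁₂
  mul_eq_one := mul_eq_one_comm.mp (by simpa only [mul_assoc] using h.mul_eq_one)

theorem isRotation_right (h : IsCyclicallyReducedRelation g₁ g₂ g₃ g₄) : IsRotation g₄ := by
  obtain hr | ⟨l, hl, rfl⟩ := h.isGenerator₄
  · exact hr
  have h₁l : g₁ ≠ swapWith l := fun e => h.mul_ne_one₄₁ (by rw [e, swapWith_mul_self hl])
  have h₃l : g₃ ≠ swapWith l := fun e => h.mul_ne_one₃₄ (by rw [e, swapWith_mul_self hl])
  exact absurd h.mul_eq_one <| mul_mul_mul_swapWith_ne_one hl h.isGenerator₁ h.isGenerator₂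
    h.isGenerator₃ h₁l h₃l

end IsCyclicallyReducedRelation

theorem not_isCyclicallyReducedRelation (g₁ g₂ g₃ g₄ : Perm (Fin (n + 3))) :
    ¬ IsCyclicallyReducedRelation g₁ g₂ g₃ g₄ := by
  intro h
  have r₁ := h.rotate.isRotation_right
  have r₂ := h.rotate.rotate.isRotation_right
  have r₃ := h.rotate.rotate.rotate.isRotation_right
  have r₄ := h.isRotation_right
  obtain rfl := r₁.eq_of_mul_ne_one r₂ h.mul_ne_one₁₂
  obtain rfl := r₁.eq_of_mul_ne_one r₃ h.mul_ne_one₂₃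
  obtain rfl := r₁.eq_of_mul_ne_one r₄ h.mul_ne_one₃₄
  exact r₁.isThreeCycle.pow_four_ne_one (by simpa [pow_succ] using h.mul_eq_one)

theorem eq_mul_rot {p q : Perm (Fin (n + 3))} (h0 : p 0 = q 1) (h1 : p 1 = q 2) (h2 : p 2 = q 0)
    (hj : ∀ j : Fin (n + 3), 3 ≤ (j : ℕ) → p j = q j) : q = p * rot := by
  ext x
  rcases Fin.eq_zero_or_eq_one_or_eq_two_or_three_le x with rfl | rfl | rfl | hx
  · simp [h2]
  · simp [h0]
  · simp [h1]
  · simp [rot_apply_of_three_le hx, hj x hx]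

theorem eq_mul_swapWith {p q : Perm (Fin (n + 3))} {i : Fin (n + 3)} (hi : 3 ≤ (i : ℕ))
    (h0 : p 0 = q 1) (h1 : p 1 = q 0) (h2 : p 2 = q i) (h2' : p i = q 2)
    (hj : ∀ j : Fin (n + 3), 3 ≤ (j : ℕ) → j ≠ i → p j = q j) : q = p * swapWith i := by
  ext x
  rcases Fin.eq_zero_or_eq_one_or_eq_two_or_three_le x with rfl | rfl | rfl | hx
  · simp [swapWith_apply_zero hi, h1]
  · simp [swapWith_apply_one hi, h0]
  · simp [swapWith_apply_two hi, h2']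
  · by_cases hxi : x = i
    · simp [hxi, swapWith_apply_self, h2]
    · simp [swapWith_apply_of_three_le hx hxi, hj x hx hxi]

theorem exists_isGenerator_of_adj {p q : Perm (Fin (n + 3))} (h : ANAdj (n + 3) p q) :
    ∃ g, IsGenerator g ∧ q = p * g := by
  obtain ⟨_, ⟨h0, h1, h2, hj⟩ | ⟨h0, h1, h2, hj⟩ | ⟨i, hi, h0, h1, h2, h2', hj⟩⟩ := h
  · exact ⟨rot, .inl (.inl rfl), eq_mul_rot h0 h1 h2 hj⟩
  · refine ⟨rot⁻¹, .inl (.inr rfl), eq_mul_inv_of_mul_eq ?_⟩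
    exact (eq_mul_rot h1.symm h2.symm h0.symm fun j hj' => (hj j hj').symm).symm
  · exact ⟨swapWith i, .inr ⟨i, hi, rfl⟩, eq_mul_swapWith hi h0 h1 h2 h2' hj⟩

end AN

theorem AN_no_four_cycle_general (n : ℕ) :
    ¬ ∃ v1 v2 v3 v4 : ANVertex n,
        v1 ≠ v2 ∧ v1 ≠ v3 ∧ v1 ≠ v4 ∧ v2 ≠ v3 ∧ v2 ≠ v4 ∧ v3 ≠ v4 ∧
        (AN n).Adj v1 v2 ∧ (AN n).Adj v2 v3 ∧ (AN n).Adj v3 v4 ∧ (AN n).Adj v4 v1 := by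
  rintro ⟨v₁, v₂, v₃, v₄, -, h₁₃, -, -, h₂₄, -, a₁₂, a₂₃, a₃₄, a₄₁⟩
  obtain ⟨m, rfl⟩ := Nat.exists_eq_add_of_le' a₁₂.1
  obtain ⟨g₁, hg₁, e₁⟩ := AN.exists_isGenerator_of_adj a₁₂
  obtain ⟨g₂, hg₂, e₂⟩ := AN.exists_isGenerator_of_adj a₂₃
  obtain ⟨g₃, hg₃, e₃⟩ := AN.exists_isGenerator_of_adj a₃₄
  obtain ⟨g₄, hg₄, e₄⟩ := AN.exists_isGenerator_of_adj a₄₁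
  refine AN.not_isCyclicallyReducedRelation g₁ g₂ g₃ g₄ ⟨hg₁, hg₂, hg₃, hg₄, ?_, ?_, ?_, ?_, ?_⟩
  · exact fun h => h₁₃ (Subtype.ext (by rw [e₂, e₁, mul_assoc, h, mul_one]))
  · exact fun h => h₂₄ (Subtype.ext (by rw [e₃, e₂, mul_assoc, h, mul_one]))
  · exact fun h => h₁₃ (Subtype.ext (by rw [e₄, e₃, mul_assoc, h, mul_one]))
  · exact fun h => h₂₄ (Subtype.ext (by rw [e₁, e₄, mul_assoc, h, mul_one]))
  · have h : v₁.1 = v₁.1 * (g₁ * g₂ * g₃ * g₄) := by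
      conv_lhs => rw [e₄, e₃, e₂, e₁]
      simp only [mul_assoc]
    exact mul_eq_left.mp h.symm

/-- For every integer `n ≥ 4`, the alternating group network `AN_n` contains no
cycle of length `4`. -/
theorem AN_no_four_cycle (n : ℕ) (hn : 4 ≤ n) :
    ¬ ∃ v1 v2 v3 v4 : ANVertex n,
        v1 ≠ v2 ∧ v1 ≠ v3 ∧ v1 ≠ v4 ∧ v2 ≠ v3 ∧ v2 ≠ v4 ∧ v3 ≠ v4 ∧
        (AN n).Adj v1 v2 ∧ (AN n).Adj v2 v3 ∧ (AN n).Adj v3 v4 ∧ (AN n).Adj v4 v1 :=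
  AN_no_four_cycle_general n
end

section
/- For every integer n ≥ 4, the n-dimensional alternating group network AN_n contains no cycle of length 5; that is, there do not exist five distinct vertices v₁, v₂, v₃, v₄, v₅ of AN_n such that v₁v₂, v₂v₃, v₃v₄, v₄v₅, and v₅v₁ are all edges of AN_n. -/
open SimpleGraph

/-!
Positions are numbered `0, …, n-1`. Acting on positions, the rotation `a = (0 2 1)`, its inverse
and the permutations `tᵢ = (0 1)(2 i)`, `i ≥ 3`, generate the adjacency of `AN_n`: `q` is adjacent
to `p` iff `q = p * g` for one of these `g`. A 5-cycle therefore gives a relation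
`g₀ g₁ g₂ g₃ g₄ = 1` between generators that is cyclically reduced, for `gᵢ gᵢ₊₁ = 1` would make
two vertices at distance two on the cycle equal. Such a word moves only the positions `0, 1, 2`
and at most five others, so relabelling positions along an embedding `Fin n ↪ Fin 8` or
`Fin 8 ↪ Fin n` carries it to `n = 8`, where a search through all `7⁵` words excludes it.
-/

open Equiv Equiv.Perm Function

namespace AlternatingGroupNetwork

section Generators

variable {α β : Type*} [DecidableEq α] [DecidableEq β]

def generators (x y z : α) : Set (Perm α) :=
  {g | g = swap x z * swap y z ∨ g = (swap x z * swap y z)⁻¹ ∨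
    ∃ i, i ≠ x ∧ i ≠ y ∧ i ≠ z ∧ g = swap x y * swap z i}

lemma viaEmbeddingHom_swap (e : α ↪ β) (a b : α) :
    viaEmbeddingHom e (swap a b) = swap (e a) (e b) := by
  ext y
  rw [viaEmbeddingHom_apply]
  by_cases hy : y ∈ Set.range e
  · obtain ⟨x, rfl⟩ := hy
    rw [viaEmbedding_apply, e.injective.swap_apply]
  · rw [viaEmbedding_apply_of_notMem _ _ y hy,
      swap_apply_of_ne_of_ne (fun h => hy ⟨a, h.symm⟩) (fun h => hy ⟨b, h.symm⟩)]

lemma mapsTo_viaEmbeddingHom_generators (e : α ↪ β) (x y z : α) :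
    Set.MapsTo (viaEmbeddingHom e) (generators x y z) (generators (e x) (e y) (e z)) := by
  rintro g (rfl | rfl | ⟨i, hx, hy, hz, rfl⟩)
  · exact Or.inl (by simp only [map_mul, viaEmbeddingHom_swap])
  · exact Or.inr (Or.inl (by simp only [map_inv, map_mul, viaEmbeddingHom_swap]))
  · exact Or.inr (Or.inr ⟨e i, by simpa using hx, by simpa using hy, by simpa using hz,
      by simp only [map_mul, viaEmbeddingHom_swap]⟩)

lemma mem_image_viaEmbeddingHom_generators (e : α ↪ β) {x y z : α} {g : Perm β}
    (hg : g ∈ generators (e x) (e y) (e z)) (hz : g (e z) ∈ Set.range e) :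
    g ∈ viaEmbeddingHom e '' generators x y z := by
  rcases hg with rfl | rfl | ⟨i, hx, hy, hz', rfl⟩
  · exact ⟨_, Or.inl rfl, by simp only [map_mul, viaEmbeddingHom_swap]⟩
  · exact ⟨_, Or.inr (Or.inl rfl), by simp only [map_inv, map_mul, viaEmbeddingHom_swap]⟩
  · obtain ⟨k, rfl⟩ : i ∈ Set.range e := by
      simpa [swap_apply_of_ne_of_ne hx hy] using hz
    exact ⟨_, Or.inr (Or.inr ⟨k, by simpa using hx, by simpa using hy, by simpa using hz',
      rfl⟩), by simp only [map_mul, viaEmbeddingHom_swap]⟩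

end Generators

section Adjacency

variable {n : ℕ}

def generatorsFin (h3 : 3 ≤ n) : Set (Perm (Fin n)) :=
  generators ⟨0, by omega⟩ ⟨1, by omega⟩ ⟨2, by omega⟩

lemma eq_mul_rotation (h3 : 3 ≤ n) {p q : Perm (Fin n)} (h0 : p ⟨0, by omega⟩ = q ⟨1, by omega⟩)
    (h1 : p ⟨1, by omega⟩ = q ⟨2, by omega⟩) (h2 : p ⟨2, by omega⟩ = q ⟨0, by omega⟩)
    (hj : ∀ j : Fin n, 3 ≤ (j : ℕ) → p j = q j) :
    q = p * (swap ⟨0, by omega⟩ ⟨2, by omega⟩ * swap ⟨1, by omega⟩ ⟨2, by omega⟩) := by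
  ext ⟨j, hjn⟩ : 1
  obtain rfl | rfl | rfl | ⟨hj3, _, _, _⟩ :
      j = 0 ∨ j = 1 ∨ j = 2 ∨ (3 ≤ j ∧ j ≠ 0 ∧ j ≠ 1 ∧ j ≠ 2) := by
    omega
  all_goals simp [swap_apply_def, *]

lemma eq_mul_transposition (h3 : 3 ≤ n) {p q : Perm (Fin n)} {i : Fin n} (hi : 3 ≤ (i : ℕ))
    (h0 : p ⟨0, by omega⟩ = q ⟨1, by omega⟩) (h1 : p ⟨1, by omega⟩ = q ⟨0, by omega⟩)
    (h2 : p ⟨2, by omega⟩ = q i) (h2' : p i = q ⟨2, by omega⟩)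
    (hj : ∀ j : Fin n, 3 ≤ (j : ℕ) → j ≠ i → p j = q j) :
    q = p * (swap ⟨0, by omega⟩ ⟨1, by omega⟩ * swap ⟨2, by omega⟩ i) := by
  obtain ⟨i, hin⟩ := i
  obtain ⟨_, _, _, _, _, _⟩ : i ≠ 0 ∧ i ≠ 1 ∧ i ≠ 2 ∧ 0 ≠ i ∧ 1 ≠ i ∧ 2 ≠ i := by
    simp only at hi; omega
  ext ⟨j, hjn⟩ : 1
  obtain rfl | rfl | rfl | rfl | ⟨hj3, _, _, _, _⟩ :
      j = 0 ∨ j = 1 ∨ j = 2 ∨ j = i ∨ (3 ≤ j ∧ j ≠ 0 ∧ j ≠ 1 ∧ j ≠ 2 ∧ j ≠ i) := by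
    omega
  all_goals simp [swap_apply_def, *]

lemma exists_eq_mul_of_ANAdj (h3 : 3 ≤ n) {p q : Perm (Fin n)} (h : ANAdj n p q) :
    ∃ g ∈ generatorsFin h3, q = p * g := by
  obtain ⟨_, ⟨h0, h1, h2, hj⟩ | ⟨h0, h1, h2, hj⟩ | ⟨i, hi, h0, h1, h2, h2', hj⟩⟩ := h
  · exact ⟨_, Or.inl rfl, eq_mul_rotation h3 h0 h1 h2 hj⟩
  · refine ⟨_, Or.inr (Or.inl rfl), eq_mul_inv_of_mul_eq ?_⟩
    exact (eq_mul_rotation h3 h1.symm h2.symm h0.symm fun j hj3 => (hj j hj3).symm).symm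
  · obtain ⟨hi0, hi1, hi2⟩ : i ≠ ⟨0, by omega⟩ ∧ i ≠ ⟨1, by omega⟩ ∧ i ≠ ⟨2, by omega⟩ := by
      simp only [ne_eq, Fin.ext_iff]; omega
    exact ⟨_, Or.inr (Or.inr ⟨i, hi0, hi1, hi2, rfl⟩),
      eq_mul_transposition h3 hi h0 h1 h2 h2' hj⟩

end Adjacency

section Words

variable {G H : Type*} [Group G] [Group H] {m : ℕ}

def IsCyclicallyReduced [NeZero m] (u : Fin m → G) : Prop := ∀ i, u i * u (i + 1) ≠ 1

lemma isCyclicallyReduced_comp_iff [NeZero m] {φ : G →* H} (hφ : Injective φ) (u : Fin m → G) :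
    IsCyclicallyReduced (φ ∘ u) ↔ IsCyclicallyReduced u := by
  simp only [IsCyclicallyReduced, comp_apply, ← map_mul, ne_eq, map_eq_one_iff φ hφ]

lemma prod_ofFn_comp_eq_one_iff {φ : G →* H} (hφ : Injective φ) (u : Fin m → G) :
    (List.ofFn (φ ∘ u)).prod = 1 ↔ (List.ofFn u).prod = 1 := by
  rw [← List.map_ofFn, ← map_list_prod, map_eq_one_iff φ hφ]

end Words

lemma exists_fin_embedding_covering {k m n : ℕ} (hkm : k ≤ m) (hmn : m ≤ n)
    (s : Finset (Fin n)) (hs : s.card + k ≤ m) :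
    ∃ e : Fin m ↪ Fin n, (∀ i : Fin k, e (Fin.castLE hkm i) = Fin.castLE (hkm.trans hmn) i) ∧
      ∀ x ∈ s, x ∈ Set.range e := by
  classical
  set P := s ∪ Finset.univ.image (Fin.castLE (hkm.trans hmn))
  have hP : P.card ≤ m := by
    calc P.card ≤ s.card + (Finset.univ.image (Fin.castLE (hkm.trans hmn))).card :=
          Finset.card_union_le _ _
      _ ≤ s.card + k := by grw [Finset.card_image_le, Finset.card_univ, Fintype.card_fin]
      _ ≤ m := hs
  obtain ⟨t, hPt, -, ht⟩ := Finset.exists_subsuperset_card_eq (Finset.subset_univ P) hP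
    (by simpa using hmn)
  obtain ⟨g, hg⟩ := Set.MapsTo.exists_equiv_extend_of_card_eq (t := t) (by simp [ht])
    (s := Set.range (Fin.castLE hkm)) (f := Fin.castLE hmn)
    (by rintro _ ⟨i, rfl⟩; exact hPt (Finset.mem_union_right _ (by simp)))
    (Fin.castLE_injective hmn).injOn
  refine ⟨g.toEmbedding.trans (Embedding.subtype _), fun i => ?_, fun x hx => ?_⟩
  · simpa using hg _ ⟨i, rfl⟩
  · obtain ⟨y, hy⟩ := g.surjective ⟨x, hPt (Finset.mem_union_left _ hx)⟩
    exact ⟨y, by simp [hy]⟩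

section Search

-- A permutation of `Fin m` as the list of its values: the search over words in `Fin 8` below
-- is then a kernel computation on lists of numerals.
def imageList {m : ℕ} (p : Perm (Fin m)) : List ℕ := List.ofFn fun i => (p i : ℕ)

def listComp (f g : List ℕ) : List ℕ := g.map fun i => f.getD i 0

variable {m : ℕ}

lemma imageList_mul (p q : Perm (Fin m)) :
    imageList (p * q) = listComp (imageList p) (imageList q) := by
  refine List.ext_getElem (by simp [imageList, listComp]) fun k _ _ => ?_
  simp [imageList, listComp]

lemma imageList_one : imageList (1 : Perm (Fin m)) = List.range m := by
  refine List.ext_getElem (by simp [imageList]) fun k _ _ => ?_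
  simp [imageList]

lemma imageList_injective : Injective (imageList : Perm (Fin m) → List ℕ) := by
  intro p q h
  ext i
  simpa [imageList] using congrFun (List.ofFn_injective h) i

def letters8 : List (List ℕ) :=
  [[2, 0, 1, 3, 4, 5, 6, 7], [1, 2, 0, 3, 4, 5, 6, 7],
   [1, 0, 3, 2, 4, 5, 6, 7], [1, 0, 4, 3, 2, 5, 6, 7], [1, 0, 5, 3, 4, 2, 6, 7],
   [1, 0, 6, 3, 4, 5, 2, 7], [1, 0, 7, 3, 4, 5, 6, 2]]

lemma imageList_mem_letters8 {g : Perm (Fin 8)} (hg : g ∈ generatorsFin (by norm_num)) :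
    imageList g ∈ letters8 := by
  rcases hg with rfl | rfl | ⟨i, h0, h1, h2, rfl⟩
  · decide
  · decide
  · fin_cases i
    all_goals first | exact absurd rfl ‹_› | decide

theorem letters8_relation_backtracks :
    ∀ a ∈ letters8, ∀ b ∈ letters8, ∀ c ∈ letters8, ∀ d ∈ letters8, ∀ e ∈ letters8,
      listComp a (listComp b (listComp c (listComp d e))) = List.range 8 →
        listComp a b = List.range 8 ∨ listComp b c = List.range 8 ∨
          listComp c d = List.range 8 ∨ listComp d e = List.range 8 ∨
            listComp e a = List.range 8 := by
  decide +kernel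

theorem prod_ne_one_of_isCyclicallyReduced_eight (u : Fin 5 → Perm (Fin 8))
    (hu : ∀ i, u i ∈ generatorsFin (by norm_num)) (hred : IsCyclicallyReduced u) :
    (List.ofFn u).prod ≠ 1 := by
  intro hprod
  have hw := congrArg imageList hprod
  simp only [List.ofFn_succ, List.ofFn_zero, List.prod_cons, List.prod_nil, mul_one,
    imageList_mul, imageList_one] at hw
  have hcancel := letters8_relation_backtracks
    _ (imageList_mem_letters8 (hu 0)) _ (imageList_mem_letters8 (hu 1))
    _ (imageList_mem_letters8 (hu 2)) _ (imageList_mem_letters8 (hu 3))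
    _ (imageList_mem_letters8 (hu 4)) hw
  simp only [← imageList_mul, ← imageList_one (m := 8), imageList_injective.eq_iff] at hcancel
  rcases hcancel with h | h | h | h | h
  exacts [hred 0 h, hred 1 h, hred 2 h, hred 3 h, hred 4 h]

end Search

theorem prod_ne_one_of_isCyclicallyReduced {n : ℕ} (h3 : 3 ≤ n) (u : Fin 5 → Perm (Fin n))
    (hu : ∀ i, u i ∈ generatorsFin h3) (hred : IsCyclicallyReduced u) :
    (List.ofFn u).prod ≠ 1 := by
  rcases le_total n 8 with hn | hn
  · have hφ := viaEmbeddingHom_injective (Fin.castLEEmb hn)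
    rw [Ne, ← prod_ofFn_comp_eq_one_iff hφ]
    exact prod_ne_one_of_isCyclicallyReduced_eight _
      (fun i => mapsTo_viaEmbeddingHom_generators _ _ _ _ (hu i))
      ((isCyclicallyReduced_comp_iff hφ u).2 hred)
  · -- Besides `0, 1, 2`, the letter `u i` moves at most the position `u i 2`.
    obtain ⟨e, he, hrange⟩ := exists_fin_embedding_covering (k := 3) (by norm_num) hn
      (Finset.univ.image fun i => u i ⟨2, by omega⟩)
      (by grw [Finset.card_image_le, Finset.card_univ, Fintype.card_fin])
    have h0 : e ⟨0, _⟩ = ⟨0, _⟩ := he 0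
    have h1 : e ⟨1, _⟩ = ⟨1, _⟩ := he 1
    have h2 : e ⟨2, _⟩ = ⟨2, _⟩ := he 2
    have hpull : ∀ i, u i ∈ viaEmbeddingHom e '' generatorsFin (by norm_num : 3 ≤ 8) := by
      intro i
      refine mem_image_viaEmbeddingHom_generators e (by rw [h0, h1, h2]; exact hu i) ?_
      rw [h2]
      exact hrange _ (Finset.mem_image_of_mem _ (Finset.mem_univ i))
    choose w hw hwu using hpull
    obtain rfl : u = viaEmbeddingHom e ∘ w := funext fun i => (hwu i).symm
    have hφ := viaEmbeddingHom_injective e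
    rw [Ne, prod_ofFn_comp_eq_one_iff hφ]
    exact prod_ne_one_of_isCyclicallyReduced_eight w hw
      ((isCyclicallyReduced_comp_iff hφ w).1 hred)

theorem exists_eq_add_two_of_closed_walk {n : ℕ} (v : Fin 5 → ANVertex n)
    (hv : ∀ i, (AN n).Adj (v i) (v (i + 1))) : ∃ i, v (i + 2) = v i := by
  have h3 : 3 ≤ n := (hv 0).1
  choose u hu hvu using fun i => exists_eq_mul_of_ANAdj h3 (hv i)
  have hprod : (List.ofFn u).prod = 1 := by
    have w0 := hvu 0; have w1 := hvu 1; have w2 := hvu 2; have w3 := hvu 3; have w4 := hvu 4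
    simp only [Fin.reduceAdd] at w0 w1 w2 w3 w4
    rw [w3, w2, w1, w0] at w4
    simpa [List.ofFn_succ, mul_assoc] using w4.symm
  by_contra! hne
  refine prod_ne_one_of_isCyclicallyReduced h3 u hu (fun i hi => hne i ?_) hprod
  apply Subtype.ext
  rw [show i + 2 = i + 1 + 1 by rw [add_assoc]; rfl, hvu, hvu, mul_assoc, hi, mul_one]

end AlternatingGroupNetwork

theorem AN_no_five_cycle_general (n : ℕ) :
    ¬ ∃ v1 v2 v3 v4 v5 : ANVertex n,
        v1 ≠ v2 ∧ v1 ≠ v3 ∧ v1 ≠ v4 ∧ v1 ≠ v5 ∧ v2 ≠ v3 ∧ v2 ≠ v4 ∧ v2 ≠ v5 ∧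
        v3 ≠ v4 ∧ v3 ≠ v5 ∧ v4 ≠ v5 ∧
        (AN n).Adj v1 v2 ∧ (AN n).Adj v2 v3 ∧ (AN n).Adj v3 v4 ∧ (AN n).Adj v4 v5 ∧
        (AN n).Adj v5 v1 := by
  rintro ⟨v1, v2, v3, v4, v5, -, h13, h14, -, -, h24, h25, -, h35, -, h12, h23, h34, h45, h51⟩
  obtain ⟨i, hi⟩ := AlternatingGroupNetwork.exists_eq_add_two_of_closed_walk
    ![v1, v2, v3, v4, v5] (fun i => by fin_cases i <;> assumption)
  fin_cases i
  exacts [h13 hi.symm, h24 hi.symm, h35 hi.symm, h14 hi, h25 hi]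

/-- For every integer `n ≥ 4`, the alternating group network `AN_n` contains no
cycle of length `5`. -/
theorem AN_no_five_cycle (n : ℕ) (hn : 4 ≤ n) :
    ¬ ∃ v1 v2 v3 v4 v5 : ANVertex n,
        v1 ≠ v2 ∧ v1 ≠ v3 ∧ v1 ≠ v4 ∧ v1 ≠ v5 ∧ v2 ≠ v3 ∧ v2 ≠ v4 ∧ v2 ≠ v5 ∧
        v3 ≠ v4 ∧ v3 ≠ v5 ∧ v4 ≠ v5 ∧
        (AN n).Adj v1 v2 ∧ (AN n).Adj v2 v3 ∧ (AN n).Adj v3 v4 ∧ (AN n).Adj v4 v5 ∧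
        (AN n).Adj v5 v1 :=
  AN_no_five_cycle_general n
end

section
/- For every integer n ≥ 4 and every i ∈ {1,…,n}, any two distinct vertices of the subnetwork AN_n^i have different out-neighbors; that is, if x and y are distinct vertices of AN_n with x_n = y_n = i, and x′ and y′ are neighbors of x and y respectively with x′_n ≠ i and y′_n ≠ i, then x′ ≠ y′. -/
open SimpleGraph

/-!
Edges of types (i) and (ii), and edges of type (iii) with `i < n`, fix the last symbol. So an
edge leaving `AN_n^i` is of type (iii) with `i = n`: it permutes positions by the fixed involution
`(1 2)(3 n)`, and a vertex is therefore recovered from its out-neighbour.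
-/

/-- The position permutation `(1 2)(3 n)`, in the 1-based positions of the informal description. -/
def outSwap (n : ℕ) (hn : 3 < n) : Equiv.Perm (Fin n) :=
  Equiv.swap ⟨0, by omega⟩ ⟨1, by omega⟩ * Equiv.swap ⟨2, by omega⟩ ⟨n - 1, by omega⟩

theorem ANAdj.eq_mul_outSwap {n : ℕ} (hn : 3 < n) {p q : Equiv.Perm (Fin n)} (h : ANAdj n p q)
    (hlast : p ⟨n - 1, by omega⟩ ≠ q ⟨n - 1, by omega⟩) : p = q * outSwap n hn := by
  obtain ⟨_, ⟨-, -, -, hfix⟩ | ⟨-, -, -, hfix⟩ | ⟨⟨k, hkn⟩, hk, h0, h1, h2, hk2, hfix⟩⟩ := h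
  · exact absurd (hfix _ (by simp only; omega)) hlast
  · exact absurd (hfix _ (by simp only; omega)) hlast
  obtain rfl : k = n - 1 := by
    by_contra hne
    exact hlast (hfix _ (by simp only; omega) (by simp [Fin.ext_iff, Ne.symm hne]))
  refine Equiv.ext fun ⟨j, hj⟩ => ?_
  simp only [outSwap, Equiv.Perm.mul_apply]
  have hlast_ne : 0 ≠ n - 1 ∧ 1 ≠ n - 1 ∧ 2 ≠ n - 1 := by omega
  rcases (by omega : j = 0 ∨ j = 1 ∨ j = 2 ∨ j = n - 1 ∨ (3 ≤ j ∧ j ≠ n - 1)) with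
    rfl | rfl | rfl | rfl | ⟨hj3, hjl⟩
  · simpa [Equiv.swap_apply_def, hlast_ne] using h0
  · simpa [Equiv.swap_apply_def, hlast_ne] using h1
  · simpa [Equiv.swap_apply_def, hlast_ne.1.symm, show n ≠ 2 by omega] using h2
  · simpa [Equiv.swap_apply_def, hlast_ne] using hk2
  · have hj_ne : j ≠ 0 ∧ j ≠ 1 ∧ j ≠ 2 := by omega
    simpa [Equiv.swap_apply_def, hj_ne, hjl] using hfix _ hj3 (by simpa using hjl)

/-- For every `n ≥ 4` and every `i`, any two distinct vertices of the subnetwork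
`AN_n^i` have different out-neighbors: if `x ≠ y` both have last symbol `i`, and
`x'`, `y'` are neighbors of `x`, `y` respectively lying outside `AN_n^i`, then
`x' ≠ y'`. -/
theorem AN_out_neighbors_distinct (n : ℕ) (hn : 4 ≤ n) (i : Fin n)
    (x y x' y' : ANVertex n) (hxy : x ≠ y)
    (hx : x.1 ⟨n - 1, by omega⟩ = i) (hy : y.1 ⟨n - 1, by omega⟩ = i)
    (hxx' : (AN n).Adj x x') (hyy' : (AN n).Adj y y')
    (hx' : x'.1 ⟨n - 1, by omega⟩ ≠ i) (hy' : y'.1 ⟨n - 1, by omega⟩ ≠ i) :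
    x' ≠ y' := by
  rintro rfl
  have hx_eq : x.1 = x'.1 * outSwap n hn := hxx'.eq_mul_outSwap hn (hx ▸ hx'.symm)
  have hy_eq : y.1 = x'.1 * outSwap n hn := hyy'.eq_mul_outSwap hn (hy ▸ hy'.symm)
  exact hxy (Subtype.ext (hx_eq.trans hy_eq.symm))
end

section
/- For every integer n ≥ 6, if F is a set of vertices of AN_n such that for every i ∈ {1,…,n} the number of vertices of F lying in the subnetwork AN_n^i is at most n − 3, then AN_n − F is connected. -/
open SimpleGraph

/-!
Write `ANBlock m v` for the vertices agreeing with `v` in every position `≥ m` (positions are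
0-based); it spans a copy of `AN_m`, and `ANBlock (m + 1) v` splits, according to the symbol in
position `m`, into the `m + 1` subblocks `ANBlock m x`. The type (iii) edge along position `m`
swaps the symbols in positions `m` and `2`, so it joins the subblock with symbol `k` to the one
with symbol `l` through each of the `(m - 1)! / 2` vertices carrying `k` in position `m` and `l`
in position `2`; every vertex lies on exactly one such edge.

By induction on `m ≥ 3`, deleting at most `m - 2` vertices from `ANBlock m v` leaves it
connected; `ANBlock 3 v` is a triangle. Let `ANBlock (m + 1) v` carry at most `m - 1` faults.
If every subblock carries at most `m - 2` of them, all subblocks stay connected, each fault cuts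
the link between at most one pair of subblocks, and a complete graph on `m + 1` vertices minus
at most `m - 1` edges still gives any two vertices a common neighbour. Otherwise all faults lie
in one subblock, which every surviving vertex leaves along its cross edge, and the other
subblocks are intact and pairwise linked.

For the theorem, the subnetworks `AN_n^i` are the subblocks of `AN_n` at position `n - 1`, each
connected by the claim for `m = n - 1`, and two of them are joined by `(n - 2)! / 2 > 2 (n - 3)`
cross edges, so one of these survives.
-/

open Equiv Equiv.Perm Finset
open scoped Nat

section Permutations

variable {α : Type*} [DecidableEq α]

theorem Equiv.Perm.exists_apply_eq_apply_eq {x₁ x₂ y₁ y₂ : α} (hx : x₁ ≠ x₂) (hy : y₁ ≠ y₂) :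
    ∃ σ : Perm α, σ x₁ = y₁ ∧ σ x₂ = y₂ ∧
      ∀ j, j ≠ x₁ → j ≠ x₂ → j ≠ y₁ → j ≠ y₂ → σ j = j := by
  refine ⟨swap y₂ (swap y₁ x₁ x₂) * swap y₁ x₁, ?_, by simp, fun j h₁ h₂ h₃ h₄ => ?_⟩
  · have : swap y₁ x₁ x₂ ≠ y₁ := by
      rw [Ne, swap_apply_eq_iff, swap_apply_left]
      exact hx.symm
    simp [swap_apply_of_ne_of_ne hy this.symm]
  · have : j ≠ swap y₁ x₁ x₂ := by
      rw [Ne, eq_comm, swap_apply_eq_iff, swap_apply_of_ne_of_ne h₃ h₁]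
      exact h₂.symm
    simp [swap_apply_of_ne_of_ne h₃ h₁, swap_apply_of_ne_of_ne h₄ this]

variable [Fintype α]

theorem two_mul_card_filter_sign_eq_one {s : Finset (Perm α)} {a b : α} (hab : a ≠ b)
    (hs : ∀ p ∈ s, p * swap a b ∈ s) : 2 * #{p ∈ s | sign p = 1} = #s := by
  have hflip : ∀ p : Perm α, sign (p * swap a b) = -sign p := by simp [sign_swap hab]
  have : #{p ∈ s | sign p = 1} = #{p ∈ s | ¬sign p = 1} := by
    refine card_nbij' (· * swap a b) (· * swap a b) ?_ ?_ ?_ ?_ <;>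
      simp only [coe_filter, Set.MapsTo, Set.LeftInvOn, Set.mem_ofPred_eq]
    · rintro p ⟨hp, hsign⟩
      exact ⟨hs p hp, by simp [hflip, hsign]⟩
    · rintro p ⟨hp, hsign⟩
      exact ⟨hs p hp, by rw [hflip, Int.units_ne_iff_eq_neg.mp hsign, neg_neg]⟩
    all_goals intro p _; simp [mul_assoc]
  rw [two_mul, ← card_filter_add_card_filter_not (s := s) (fun p => sign p = 1), this]

theorem card_perm_eqOn_compl (A : Finset α) (p₀ : Perm α) :
    #{p : Perm α | ∀ j ∉ A, p j = p₀ j} = (#A)! := by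
  rw [← Fintype.card_subtype, ← Fintype.card_coe A, ← Fintype.card_perm,
    Fintype.card_congr (Perm.subtypeEquivSubtypePerm (· ∈ A))]
  refine Fintype.card_congr (subtypeEquiv (Equiv.mulLeft p₀⁻¹) fun p => ?_)
  simp only [coe_mulLeft, Perm.mul_apply, Perm.inv_eq_iff_eq]

theorem two_mul_card_sign_eq_one_eqOn_compl {A : Finset α} (hA : 2 ≤ #A) (p₀ : Perm α) :
    2 * #{p : Perm α | sign p = 1 ∧ ∀ j ∉ A, p j = p₀ j} = (#A)! := by
  obtain ⟨a, ha, b, hb, hab⟩ := one_lt_card.mp hA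
  have h := two_mul_card_filter_sign_eq_one (s := {p : Perm α | ∀ j ∉ A, p j = p₀ j}) hab ?_
  · rwa [filter_filter, card_perm_eqOn_compl, ← filter_congr (fun p _ => and_comm)] at h
  · simp only [mem_filter, mem_univ, true_and]
    intro p hp j hj
    rw [Perm.mul_apply, swap_apply_of_ne_of_ne (ne_of_mem_of_not_mem ha hj).symm
      (ne_of_mem_of_not_mem hb hj).symm, hp j hj]

end Permutations

theorem exists_rel_rel_of_card_blocked_add_two_le {α : Type*} [DecidableEq α]
    {R : α → α → Prop} {K : Finset α} {B : Finset (Sym2 α)}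
    (hB : ∀ k ∈ K, ∀ l ∈ K, k ≠ l → ¬R k l → s(k, l) ∈ B) (hcard : #B + 2 ≤ #K)
    {k l : α} (hk : k ∈ K) (hl : l ∈ K) (hkl : k ≠ l) (hR : ¬R k l) :
    ∃ w ∈ K, R k w ∧ R w l := by
  by_contra! hw
  -- `f` sends `l` to `s(k, l)` and every other `w ∈ K \ {k}` to a blocked pair through `k` or
  -- through `l`; these pairs are distinct, so `#B ≥ #K - 1`.
  let f : α → Sym2 α := fun w => if s(k, w) ∈ B then s(k, w) else s(w, l)
  have hmaps : Set.MapsTo f (K.erase k) B := by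
    intro w hw'
    obtain ⟨hwk, hwK⟩ := mem_erase.mp hw'
    by_cases hkw : s(k, w) ∈ B
    · simp [f, hkw]
    have hRkw : R k w := by_contra fun h => hkw (hB k hk w hwK hwk.symm h)
    have hwl : w ≠ l := by rintro rfl; exact hR hRkw
    simpa [f, hkw] using hB w hwK l hl hwl (hw w hwK hRkw)
  have hinj : Set.InjOn f (K.erase k) := by
    intro w hw w' hw' h
    have hwk := (mem_erase.mp hw).1
    have hw'k := (mem_erase.mp hw').1
    simp only [f] at h
    split_ifs at h <;> grind [Sym2.eq_iff]
  have := card_le_card_of_injOn f hmaps hinj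
  rw [card_erase_of_mem hk] at this
  omega

theorem SimpleGraph.Preconnected.reachable_induce_of_subset {V : Type*} {G : SimpleGraph V}
    {s t : Set V} (h : (G.induce s).Preconnected) (hst : s ⊆ t) {a b : V} (ha : a ∈ s)
    (hb : b ∈ s) : (G.induce t).Reachable ⟨a, hst ha⟩ ⟨b, hst hb⟩ :=
  (h ⟨a, ha⟩ ⟨b, hb⟩).map (G.induceHomOfLE hst).toHom

theorem four_mul_pred_lt_factorial {t : ℕ} (ht : 4 ≤ t) : 4 * (t - 1) < t ! := by
  obtain ⟨s, rfl⟩ : ∃ s, t = s + 4 := ⟨t - 4, by omega⟩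
  have h2 : 2 ≤ (s + 2)! := (by omega : 2 ≤ s + 2).trans (Nat.self_le_factorial _)
  rw [Nat.factorial_succ, Nat.factorial_succ, show s + 4 - 1 = s + 3 by omega]
  nlinarith [Nat.mul_le_mul_left ((s + 3 + 1) * (s + 2 + 1)) h2]

section AlternatingGroupNetwork

variable {n : ℕ}

theorem two_mul_card_ANVertex_eqOn_compl {A : Finset (Fin n)} (hA : 2 ≤ #A)
    (p₀ : Perm (Fin n)) : 2 * #{p : ANVertex n | ∀ j ∉ A, p.1 j = p₀ j} = (#A)! := by
  rw [← two_mul_card_sign_eq_one_eqOn_compl hA p₀, ← Fintype.card_subtype,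
    ← Fintype.card_subtype]
  exact congrArg _ (Fintype.card_congr (subtypeSubtypeEquivSubtypeInter (sign · = 1)
    fun p => ∀ j ∉ A, p j = p₀ j))

section CrossNeighbor

variable (i : Fin n) (hi : 3 ≤ (i : ℕ))

def crossNeighbor (p : ANVertex n) : ANVertex n :=
  ⟨p.1 * (swap ⟨0, by omega⟩ ⟨1, by omega⟩ * swap ⟨2, by omega⟩ i), by
    have : (2 : ℕ) ≠ i := by omega
    simp [p.2, sign_swap', Fin.ext_iff, this]⟩

variable {i} (p : ANVertex n)

theorem crossNeighbor_apply (j : Fin n) : (crossNeighbor i hi p).1 j =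
    p.1 (swap ⟨0, by omega⟩ ⟨1, by omega⟩ (swap ⟨2, by omega⟩ i j)) :=
  rfl

theorem crossNeighbor_apply_zero :
    (crossNeighbor i hi p).1 ⟨0, by omega⟩ = p.1 ⟨1, by omega⟩ := by
  rw [crossNeighbor_apply, swap_apply_of_ne_of_ne (a := (⟨2, by omega⟩ : Fin n)),
    swap_apply_left] <;> simp [Fin.ext_iff]; omega

theorem crossNeighbor_apply_one :
    (crossNeighbor i hi p).1 ⟨1, by omega⟩ = p.1 ⟨0, by omega⟩ := by
  rw [crossNeighbor_apply, swap_apply_of_ne_of_ne (a := (⟨2, by omega⟩ : Fin n)),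
    swap_apply_right] <;> simp [Fin.ext_iff]; omega

theorem crossNeighbor_apply_two : (crossNeighbor i hi p).1 ⟨2, by omega⟩ = p.1 i := by
  rw [crossNeighbor_apply, swap_apply_left, swap_apply_of_ne_of_ne] <;>
    simp [Fin.ext_iff] <;> omega

theorem crossNeighbor_apply_self : (crossNeighbor i hi p).1 i = p.1 ⟨2, by omega⟩ := by
  rw [crossNeighbor_apply, swap_apply_right, swap_apply_of_ne_of_ne] <;> simp [Fin.ext_iff]

theorem crossNeighbor_apply_of_ne {j : Fin n} (hj : 3 ≤ (j : ℕ)) (hji : j ≠ i) :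
    (crossNeighbor i hi p).1 j = p.1 j := by
  have := Fin.val_ne_of_ne hji
  rw [crossNeighbor_apply, swap_apply_of_ne_of_ne (a := (⟨2, by omega⟩ : Fin n)),
    swap_apply_of_ne_of_ne] <;> simp [Fin.ext_iff] <;> omega

theorem adj_crossNeighbor : (AN n).Adj p (crossNeighbor i hi p) :=
  ⟨by omega, Or.inr (Or.inr ⟨i, hi, (crossNeighbor_apply_one hi p).symm,
    (crossNeighbor_apply_zero hi p).symm, (crossNeighbor_apply_self hi p).symm,
    (crossNeighbor_apply_two hi p).symm,
    fun _ hj hji => (crossNeighbor_apply_of_ne hi p hj hji).symm⟩)⟩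

theorem crossNeighbor_injective : Function.Injective (crossNeighbor i hi) :=
  fun _ _ h => Subtype.ext (mul_right_cancel (congrArg Subtype.val h))

end CrossNeighbor

section RotNeighbor

variable (h3 : 3 ≤ n)

def rotNeighbor (p : ANVertex n) : ANVertex n :=
  ⟨p.1 * (swap ⟨0, by omega⟩ ⟨1, by omega⟩ * swap ⟨0, by omega⟩ ⟨2, by omega⟩), by
    simp [p.2, sign_swap', Fin.ext_iff]⟩

variable (p : ANVertex n)

theorem rotNeighbor_apply (j : Fin n) : (rotNeighbor h3 p).1 j =
    p.1 (swap ⟨0, by omega⟩ ⟨1, by omega⟩ (swap ⟨0, by omega⟩ ⟨2, by omega⟩ j)) :=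
  rfl

theorem rotNeighbor_apply_zero : (rotNeighbor h3 p).1 ⟨0, by omega⟩ = p.1 ⟨2, by omega⟩ := by
  rw [rotNeighbor_apply, swap_apply_left, swap_apply_of_ne_of_ne] <;> simp [Fin.ext_iff]

theorem rotNeighbor_apply_one : (rotNeighbor h3 p).1 ⟨1, by omega⟩ = p.1 ⟨0, by omega⟩ := by
  simp [rotNeighbor_apply, swap_apply_def, Fin.ext_iff]

theorem rotNeighbor_apply_two : (rotNeighbor h3 p).1 ⟨2, by omega⟩ = p.1 ⟨1, by omega⟩ := by
  rw [rotNeighbor_apply, swap_apply_right, swap_apply_left]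

theorem rotNeighbor_apply_of_three_le {j : Fin n} (hj : 3 ≤ (j : ℕ)) :
    (rotNeighbor h3 p).1 j = p.1 j := by
  simp only [rotNeighbor_apply, swap_apply_def, Fin.ext_iff]
  split_ifs <;> omega

theorem adj_rotNeighbor : (AN n).Adj p (rotNeighbor h3 p) :=
  ⟨h3, Or.inl ⟨(rotNeighbor_apply_one h3 p).symm, (rotNeighbor_apply_two h3 p).symm,
    (rotNeighbor_apply_zero h3 p).symm, fun _ hj => (rotNeighbor_apply_of_three_le h3 p hj).symm⟩⟩

theorem adj_rotNeighbor_rotNeighbor : (AN n).Adj p (rotNeighbor h3 (rotNeighbor h3 p)) := by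
  refine ⟨h3, Or.inr (Or.inl ⟨?_, ?_, ?_, fun _ hj => ?_⟩)⟩
  · rw [rotNeighbor_apply_two, rotNeighbor_apply_one]
  · rw [rotNeighbor_apply_zero, rotNeighbor_apply_two]
  · rw [rotNeighbor_apply_one, rotNeighbor_apply_zero]
  · rw [rotNeighbor_apply_of_three_le h3 _ hj, rotNeighbor_apply_of_three_le h3 _ hj]

end RotNeighbor

def ANBlock (m : ℕ) (v : ANVertex n) : Finset (ANVertex n) :=
  {p | ∀ j : Fin n, m ≤ (j : ℕ) → p.1 j = v.1 j}

abbrev ANBlockGraph (m : ℕ) (v : ANVertex n) (F : Finset (ANVertex n)) :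
    SimpleGraph (↑(ANBlock m v \ F : Finset (ANVertex n)) : Set (ANVertex n)) :=
  (AN n).induce ↑(ANBlock m v \ F)

section Blocks

variable {m : ℕ} {v x y : ANVertex n}

theorem mem_ANBlock : y ∈ ANBlock m v ↔ ∀ j : Fin n, m ≤ (j : ℕ) → y.1 j = v.1 j := by
  simp [ANBlock]

theorem mem_ANBlock_of_mem_of_mem (hx : x ∈ ANBlock m v) (hy : y ∈ ANBlock m v) :
    y ∈ ANBlock m x := by
  rw [mem_ANBlock] at hx hy ⊢
  exact fun j hj => (hy j hj).trans (hx j hj).symm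

theorem ANBlock_subset_of_mem (hx : x ∈ ANBlock (m + 1) v) : ANBlock m x ⊆ ANBlock (m + 1) v := by
  simp only [subset_iff, mem_ANBlock] at hx ⊢
  intro p hp j hj
  rw [hp j (by omega), hx j hj]

theorem mem_ANBlock_iff_of_mem_succ (hmn : m < n) (hx : x ∈ ANBlock (m + 1) v) :
    y ∈ ANBlock m x ↔ y ∈ ANBlock (m + 1) v ∧ y.1 ⟨m, hmn⟩ = x.1 ⟨m, hmn⟩ := by
  simp only [mem_ANBlock] at hx ⊢
  refine ⟨fun hy => ⟨fun j hj => (hy j (by omega)).trans (hx j hj), hy _ le_rfl⟩, ?_⟩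
  rintro ⟨hy, hym⟩ j hj
  rcases hj.eq_or_lt with hj | hj
  · rwa [show j = ⟨m, hmn⟩ from Fin.ext hj.symm]
  · rw [hy j hj, hx j hj]

theorem symm_apply_le_of_mem_ANBlock (hx : x ∈ ANBlock (m + 1) v) (j : Fin n)
    (hj : (j : ℕ) ≤ m) : (v.1.symm (x.1 j) : ℕ) ≤ m := by
  by_contra! h
  have := (mem_ANBlock.mp hx _ h).symm
  rw [apply_symm_apply] at this
  have := x.1.injective this
  omega

variable (hm : 3 ≤ m) (hmn : m < n)

theorem crossNeighbor_mem_ANBlock {p : ANVertex n} (hp : p ∈ ANBlock (m + 1) v) :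
    crossNeighbor ⟨m, hmn⟩ hm p ∈ ANBlock (m + 1) v := by
  rw [mem_ANBlock] at hp ⊢
  intro j hj
  rw [crossNeighbor_apply_of_ne hm p (by omega) (by simp [Fin.ext_iff]; omega), hp j hj]

theorem two_mul_card_ANBlock_filter_apply_eq_apply_eq {k l : Fin n}
    (hk : (v.1.symm k : ℕ) ≤ m) (hl : (v.1.symm l : ℕ) ≤ m) (hkl : k ≠ l) :
    2 * #{p ∈ ANBlock (m + 1) v | p.1 ⟨m, hmn⟩ = k ∧ p.1 ⟨2, by omega⟩ = l} = (m - 1)! := by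
  -- `v * σ` carries `k` in position `m` and `l` in position `2`, and agrees with `v` beyond `m`;
  -- the set counted is that of the even permutations agreeing with `v * σ` off the positions
  -- `j < m`, `j ≠ 2`.
  obtain ⟨σ, hσm, hσ2, hσ⟩ := Perm.exists_apply_eq_apply_eq (x₁ := (⟨m, hmn⟩ : Fin n))
    (x₂ := ⟨2, by omega⟩) (by simp [Fin.ext_iff]; omega) (v.1.symm.injective.ne hkl)
  have hA : #{j : Fin n | (j : ℕ) < m ∧ (j : ℕ) ≠ 2} = m - 1 := by
    rw [show ({j : Fin n | (j : ℕ) < m ∧ (j : ℕ) ≠ 2} : Finset _) =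
      ({j : Fin n | (j : ℕ) < m} : Finset _).erase ⟨2, by omega⟩ by
        ext j; simp [Fin.ext_iff, and_comm],
      card_erase_of_mem (by simp; omega), Fin.card_filter_val_lt]
    omega
  rw [← hA, ← two_mul_card_ANVertex_eqOn_compl (by omega) (v.1 * σ)]
  congr 2
  ext p
  simp only [mem_filter, mem_univ, true_and, mem_ANBlock, Perm.mul_apply, not_and_or, not_lt,
    not_not]
  constructor
  · rintro ⟨hp, hpm, hp2⟩ j (hj | hj)
    · rcases hj.eq_or_lt with hj | hj
      · rwa [show j = ⟨m, hmn⟩ from Fin.ext hj.symm, hσm, apply_symm_apply]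
      · rw [hp j hj, hσ j] <;> simp [Fin.ext_iff] <;> omega
    · rwa [show j = ⟨2, by omega⟩ from Fin.ext hj, hσ2, apply_symm_apply]
  · intro hp
    refine ⟨fun j hj => ?_, ?_, ?_⟩
    · rw [hp j (Or.inl (by omega)), hσ j] <;> simp [Fin.ext_iff] <;> omega
    · rw [hp _ (Or.inl le_rfl), hσm, apply_symm_apply]
    · rw [hp _ (Or.inr rfl), hσ2, apply_symm_apply]

theorem exists_mem_ANBlock_apply_eq_apply_eq {k l : Fin n}
    (hk : (v.1.symm k : ℕ) ≤ m) (hl : (v.1.symm l : ℕ) ≤ m) (hkl : k ≠ l) :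
    ∃ p ∈ ANBlock (m + 1) v, p.1 ⟨m, hmn⟩ = k ∧ p.1 ⟨2, by omega⟩ = l := by
  have hcard := two_mul_card_ANBlock_filter_apply_eq_apply_eq hm hmn hk hl hkl
  by_contra! h
  rw [filter_eq_empty_iff.mpr fun p hp hpk => h p hp hpk.1 hpk.2, card_empty] at hcard
  exact (Nat.factorial_pos _).ne' hcard.symm

end Blocks

theorem card_filter_symm_apply_le {m : ℕ} (hmn : m < n) (v : ANVertex n) :
    #{k : Fin n | (v.1.symm k : ℕ) ≤ m} = m + 1 := by
  rw [card_equiv v.1.symm (t := {j : Fin n | (j : ℕ) < m + 1}) (by simp),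
    Fin.card_filter_val_lt]
  omega

theorem ANBlock_three_eq (h3 : 3 ≤ n) (p : ANVertex n) :
    ANBlock 3 p = {p, rotNeighbor h3 p, rotNeighbor h3 (rotNeighbor h3 p)} := by
  have hA : #{j : Fin n | (j : ℕ) < 3} = 3 := by rw [Fin.card_filter_val_lt]; omega
  have hcard : 2 * #(ANBlock 3 p) = 3! := by
    have := two_mul_card_ANVertex_eqOn_compl (A := {j : Fin n | (j : ℕ) < 3}) (by omega) p.1
    rw [hA] at this
    convert this using 3
    simp [ANBlock]
  have hne : ∀ {q r : ANVertex n} (a b : Fin n), a ≠ b →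
      q.1 ⟨0, by omega⟩ = p.1 a → r.1 ⟨0, by omega⟩ = p.1 b → q ≠ r := by
    rintro q r a b hab hq hr rfl
    exact hab (p.1.injective (hq.symm.trans hr))
  symm
  refine eq_of_subset_of_card_le ?_ ?_
  · simp only [insert_subset_iff, singleton_subset_iff, mem_ANBlock]
    refine ⟨fun _ _ => trivial, fun j hj => rotNeighbor_apply_of_three_le h3 p hj,
      fun j hj => ?_⟩
    rw [rotNeighbor_apply_of_three_le h3 _ hj, rotNeighbor_apply_of_three_le h3 p hj]
  · rw [card_eq_three.mpr ⟨_, _, _, ?_, ?_, ?_, rfl⟩]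
    · rw [show 3! = 6 from rfl] at hcard
      omega
    · exact hne ⟨0, by omega⟩ ⟨2, by omega⟩ (by simp) rfl (rotNeighbor_apply_zero h3 p)
    · exact hne ⟨0, by omega⟩ ⟨1, by omega⟩ (by simp) rfl
        (by rw [rotNeighbor_apply_zero, rotNeighbor_apply_two])
    · exact hne ⟨2, by omega⟩ ⟨1, by omega⟩ (by simp) (rotNeighbor_apply_zero h3 p)
        (by rw [rotNeighbor_apply_zero, rotNeighbor_apply_two])

theorem ANBlockGraph_three_preconnected (h3 : 3 ≤ n) (v : ANVertex n)
    (F : Finset (ANVertex n)) : (ANBlockGraph 3 v F).Preconnected := by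
  rintro ⟨x, hx⟩ ⟨y, hy⟩
  obtain rfl | hxy := eq_or_ne x y
  · rfl
  have hyx := mem_ANBlock_of_mem_of_mem (mem_sdiff.mp hx).1 (mem_sdiff.mp hy).1
  rw [ANBlock_three_eq h3 x] at hyx
  simp only [mem_insert, mem_singleton] at hyx
  obtain rfl | rfl | rfl := hyx
  · exact absurd rfl hxy
  · exact Adj.reachable (G := ANBlockGraph _ _ _) (adj_rotNeighbor h3 x)
  · exact Adj.reachable (G := ANBlockGraph _ _ _) (adj_rotNeighbor_rotNeighbor h3 x)

section Subblocks

variable {m : ℕ} (hm : 3 ≤ m) (hmn : m < n) {v : ANVertex n} {F : Finset (ANVertex n)}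

variable (v F) in
def CrossLinked (k l : Fin n) : Prop :=
  ∃ p ∈ ANBlock (m + 1) v \ F, crossNeighbor ⟨m, hmn⟩ hm p ∉ F ∧
    p.1 ⟨m, hmn⟩ = k ∧ p.1 ⟨2, by omega⟩ = l

theorem ANBlockGraph_reachable_of_apply_eq {x y : ANVertex n} (hx : x ∈ ANBlock (m + 1) v \ F)
    (hy : y ∈ ANBlock (m + 1) v \ F) (hxF : (ANBlockGraph m x F).Preconnected)
    (hxy : y.1 ⟨m, hmn⟩ = x.1 ⟨m, hmn⟩) :
    (ANBlockGraph (m + 1) v F).Reachable ⟨x, hx⟩ ⟨y, hy⟩ :=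
  have hxv := (mem_sdiff.mp hx).1
  hxF.reachable_induce_of_subset
    (coe_subset.mpr (sdiff_subset_sdiff (ANBlock_subset_of_mem hxv) le_rfl))
    (mem_sdiff.mpr ⟨mem_ANBlock.mpr fun _ _ => rfl, (mem_sdiff.mp hx).2⟩)
    (mem_sdiff.mpr ⟨(mem_ANBlock_iff_of_mem_succ hmn hxv).mpr ⟨(mem_sdiff.mp hy).1, hxy⟩,
      (mem_sdiff.mp hy).2⟩)

theorem ANBlockGraph_reachable_of_crossLinked {x y : ANVertex n}
    (hx : x ∈ ANBlock (m + 1) v \ F) (hy : y ∈ ANBlock (m + 1) v \ F)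
    (hxF : (ANBlockGraph m x F).Preconnected) (hyF : (ANBlockGraph m y F).Preconnected)
    (hxy : CrossLinked hm hmn v F (x.1 ⟨m, hmn⟩) (y.1 ⟨m, hmn⟩)) :
    (ANBlockGraph (m + 1) v F).Reachable ⟨x, hx⟩ ⟨y, hy⟩ := by
  obtain ⟨p, hp, hqF, hpx, hpy⟩ := hxy
  have hq : crossNeighbor ⟨m, hmn⟩ hm p ∈ ANBlock (m + 1) v \ F :=
    mem_sdiff.mpr ⟨crossNeighbor_mem_ANBlock hm hmn (mem_sdiff.mp hp).1, hqF⟩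
  have hpq : (ANBlockGraph (m + 1) v F).Adj ⟨p, hp⟩ ⟨_, hq⟩ := adj_crossNeighbor hm p
  exact ((ANBlockGraph_reachable_of_apply_eq hmn hx hp hxF hpx).trans hpq.reachable).trans
    (ANBlockGraph_reachable_of_apply_eq hmn hy hq hyF
      ((crossNeighbor_apply_self hm p).trans hpy)).symm

theorem ANBlockGraph_succ_preconnected_of_fibers
    (hfib : ∀ x ∈ ANBlock (m + 1) v, (ANBlockGraph m x F).Preconnected)
    (hlink : ∀ x ∈ ANBlock (m + 1) v, ∀ y ∈ ANBlock (m + 1) v,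
      Relation.ReflTransGen (CrossLinked hm hmn v F) (x.1 ⟨m, hmn⟩) (y.1 ⟨m, hmn⟩)) :
    (ANBlockGraph (m + 1) v F).Preconnected := by
  rintro ⟨x, hx⟩ ⟨y, hy⟩
  have hxv := (mem_sdiff.mp hx).1
  suffices ∀ l, Relation.ReflTransGen (CrossLinked hm hmn v F) (x.1 ⟨m, hmn⟩) l →
      ∀ y (hy : y ∈ ANBlock (m + 1) v \ F), y.1 ⟨m, hmn⟩ = l →
        (ANBlockGraph (m + 1) v F).Reachable ⟨x, hx⟩ ⟨y, hy⟩ from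
    this _ (hlink x hxv y (mem_sdiff.mp hy).1) y hy rfl
  intro l hl
  induction hl with
  | refl => exact fun y hy hyx => ANBlockGraph_reachable_of_apply_eq hmn hx hy (hfib x hxv) hyx
  | tail _ hkl ih =>
    intro y hy hyl
    obtain ⟨p, hp, hqF, hpk, hpl⟩ := hkl
    refine (ih p hp hpk).trans (ANBlockGraph_reachable_of_crossLinked hm hmn hp hy
      (hfib p (mem_sdiff.mp hp).1) (hfib y (mem_sdiff.mp hy).1) ?_)
    rw [hpk, hyl]
    exact ⟨p, hp, hqF, hpk, hpl⟩

theorem crossLinked_or_mem_image {k l : Fin n} (hk : (v.1.symm k : ℕ) ≤ m)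
    (hl : (v.1.symm l : ℕ) ≤ m) (hkl : k ≠ l) :
    CrossLinked hm hmn v F k l ∨ s(k, l) ∈
      {f ∈ F | f ∈ ANBlock (m + 1) v}.image fun f => s(f.1 ⟨m, hmn⟩, f.1 ⟨2, by omega⟩) := by
  obtain ⟨p, hp, hpk, hpl⟩ := exists_mem_ANBlock_apply_eq_apply_eq hm hmn hk hl hkl
  by_cases hpF : p ∈ F
  · exact Or.inr (mem_image.mpr ⟨p, mem_filter.mpr ⟨hpF, hp⟩, by rw [hpk, hpl]⟩)
  by_cases hqF : crossNeighbor ⟨m, hmn⟩ hm p ∈ F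
  · refine Or.inr (mem_image.mpr
      ⟨_, mem_filter.mpr ⟨hqF, crossNeighbor_mem_ANBlock hm hmn hp⟩, ?_⟩)
    rw [crossNeighbor_apply_self, crossNeighbor_apply_two, hpk, hpl, Sym2.eq_swap]
  exact Or.inl ⟨p, mem_sdiff.mpr ⟨hp, hpF⟩, hqF, hpk, hpl⟩

theorem reflTransGen_crossLinked (hF : #{f ∈ F | f ∈ ANBlock (m + 1) v} + 2 ≤ m + 1)
    {k l : Fin n} (hk : (v.1.symm k : ℕ) ≤ m) (hl : (v.1.symm l : ℕ) ≤ m) :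
    Relation.ReflTransGen (CrossLinked hm hmn v F) k l := by
  obtain rfl | hkl := eq_or_ne k l
  · exact .refl
  by_cases hlink : CrossLinked hm hmn v F k l
  · exact .single hlink
  set B := {f ∈ F | f ∈ ANBlock (m + 1) v}.image fun f => s(f.1 ⟨m, hmn⟩, f.1 ⟨2, by omega⟩)
  have hB : #B ≤ #{f ∈ F | f ∈ ANBlock (m + 1) v} := card_image_le
  obtain ⟨w, -, hkw, hwl⟩ := exists_rel_rel_of_card_blocked_add_two_le
    (K := {k : Fin n | (v.1.symm k : ℕ) ≤ m}) (B := B)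
    (fun k hk l hl hkl hkl' => (crossLinked_or_mem_image hm hmn (mem_filter.mp hk).2
      (mem_filter.mp hl).2 hkl).resolve_left hkl')
    (by rw [card_filter_symm_apply_le hmn v]; omega)
    (by simpa using hk) (by simpa using hl) hkl hlink
  exact .tail (.single hkw) hwl

theorem crossLinked_of_card_lt {k l : Fin n} (hk : (v.1.symm k : ℕ) ≤ m)
    (hl : (v.1.symm l : ℕ) ≤ m) (hkl : k ≠ l)
    (hF : 2 * (#{f ∈ F | f.1 ⟨m, hmn⟩ = k} + #{f ∈ F | f.1 ⟨m, hmn⟩ = l}) < (m - 1)!) :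
    CrossLinked hm hmn v F k l := by
  by_contra hkl'
  have hcount := two_mul_card_ANBlock_filter_apply_eq_apply_eq hm hmn hk hl hkl
  set X := {p ∈ ANBlock (m + 1) v | p.1 ⟨m, hmn⟩ = k ∧ p.1 ⟨2, by omega⟩ = l}
  have hX : X ⊆ {p ∈ X | p ∈ F} ∪ {p ∈ X | crossNeighbor ⟨m, hmn⟩ hm p ∈ F} := by
    intro p hp
    simp only [mem_union, mem_filter]
    by_contra! h
    exact hkl' ⟨p, mem_sdiff.mpr ⟨(mem_filter.mp hp).1, h.1 hp⟩, h.2 hp, (mem_filter.mp hp).2⟩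
  have hXk : {p ∈ X | p ∈ F} ⊆ {f ∈ F | f.1 ⟨m, hmn⟩ = k} := by
    intro p hp
    simp only [X, mem_filter] at hp ⊢
    exact ⟨hp.2, hp.1.2.1⟩
  have hXl : #{p ∈ X | crossNeighbor ⟨m, hmn⟩ hm p ∈ F} ≤ #{f ∈ F | f.1 ⟨m, hmn⟩ = l} := by
    refine card_le_card_of_injOn _ (fun p hp => ?_)
      (crossNeighbor_injective (i := ⟨m, hmn⟩) hm).injOn
    simp only [X, coe_filter, mem_filter, Set.mem_ofPred_eq] at hp ⊢
    exact ⟨hp.2, (crossNeighbor_apply_self hm p).trans hp.1.2.2⟩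
  have := card_le_card hX
  have := card_union_le {p ∈ X | p ∈ F} {p ∈ X | crossNeighbor ⟨m, hmn⟩ hm p ∈ F}
  have := card_le_card hXk
  omega

end Subblocks

section Induction

variable {m : ℕ} {v : ANVertex n} {F : Finset (ANVertex n)}

theorem ANBlockGraph_exists_reachable_apply_ne (hm : 3 ≤ m) (hmn : m < n) {c : Fin n}
    (hF : ∀ f ∈ F, f ∈ ANBlock (m + 1) v → f.1 ⟨m, hmn⟩ = c) {x : ANVertex n}
    (hx : x ∈ ANBlock (m + 1) v \ F) : ∃ y, ∃ hy : y ∈ ANBlock (m + 1) v \ F,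
      y.1 ⟨m, hmn⟩ ≠ c ∧ (ANBlockGraph (m + 1) v F).Reachable ⟨x, hx⟩ ⟨y, hy⟩ := by
  by_cases hxc : x.1 ⟨m, hmn⟩ = c
  · have hxv := (mem_sdiff.mp hx).1
    have hyc : (crossNeighbor ⟨m, hmn⟩ hm x).1 ⟨m, hmn⟩ ≠ c := by
      rw [crossNeighbor_apply_self, ← hxc]
      exact x.1.injective.ne (by simp [Fin.ext_iff]; omega)
    refine ⟨_, mem_sdiff.mpr ⟨crossNeighbor_mem_ANBlock hm hmn hxv, fun h => hyc ?_⟩, hyc,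
      Adj.reachable (G := ANBlockGraph _ _ _) (adj_crossNeighbor hm x)⟩
    exact hF _ h (crossNeighbor_mem_ANBlock hm hmn hxv)
  · exact ⟨x, hx, hxc, .rfl⟩

theorem ANBlockGraph_succ_preconnected_of_forall_apply_eq (hm : 3 ≤ m) (hmn : m < n) {c : Fin n}
    (hF : ∀ f ∈ F, f ∈ ANBlock (m + 1) v → f.1 ⟨m, hmn⟩ = c)
    (hfib : ∀ x ∈ ANBlock (m + 1) v, x.1 ⟨m, hmn⟩ ≠ c → (ANBlockGraph m x F).Preconnected) :
    (ANBlockGraph (m + 1) v F).Preconnected := by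
  have hgood : ∀ x y (hx : x ∈ ANBlock (m + 1) v \ F) (hy : y ∈ ANBlock (m + 1) v \ F),
      x.1 ⟨m, hmn⟩ ≠ c → y.1 ⟨m, hmn⟩ ≠ c →
        (ANBlockGraph (m + 1) v F).Reachable ⟨x, hx⟩ ⟨y, hy⟩ := by
    intro x y hx hy hxc hyc
    have hxv := (mem_sdiff.mp hx).1
    have hyv := (mem_sdiff.mp hy).1
    by_cases hxy : y.1 ⟨m, hmn⟩ = x.1 ⟨m, hmn⟩
    · exact ANBlockGraph_reachable_of_apply_eq hmn hx hy (hfib x hxv hxc) hxy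
    obtain ⟨p, hp, hpx, hpy⟩ := exists_mem_ANBlock_apply_eq_apply_eq hm hmn
      (symm_apply_le_of_mem_ANBlock hxv _ le_rfl) (symm_apply_le_of_mem_ANBlock hyv _ le_rfl)
      (Ne.symm hxy)
    have hqy := (crossNeighbor_apply_self (i := ⟨m, hmn⟩) hm p).trans hpy
    refine ANBlockGraph_reachable_of_crossLinked hm hmn hx hy (hfib x hxv hxc) (hfib y hyv hyc)
      ⟨p, mem_sdiff.mpr ⟨hp, fun h => hxc ?_⟩, fun h => hyc ?_, hpx, hpy⟩
    · exact hpx ▸ hF p h hp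
    · exact hqy ▸ hF _ h (crossNeighbor_mem_ANBlock hm hmn hp)
  rintro ⟨x, hx⟩ ⟨y, hy⟩
  obtain ⟨x', hx', hx'c, hxx'⟩ := ANBlockGraph_exists_reachable_apply_ne hm hmn hF hx
  obtain ⟨y', hy', hy'c, hyy'⟩ := ANBlockGraph_exists_reachable_apply_ne hm hmn hF hy
  exact hxx'.trans ((hgood x' y' hx' hy' hx'c hy'c).trans hyy'.symm)

theorem ANBlockGraph_succ_preconnected (hm : 3 ≤ m) (hmn : m < n)
    (IH : ∀ (x : ANVertex n) (F : Finset (ANVertex n)),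
      #{f ∈ F | f ∈ ANBlock m x} + 2 ≤ m → (ANBlockGraph m x F).Preconnected)
    (hF : #{f ∈ F | f ∈ ANBlock (m + 1) v} + 2 ≤ m + 1) :
    (ANBlockGraph (m + 1) v F).Preconnected := by
  by_cases hfib : ∀ x ∈ ANBlock (m + 1) v, #{f ∈ F | f ∈ ANBlock m x} + 2 ≤ m
  · exact ANBlockGraph_succ_preconnected_of_fibers hm hmn (fun x hx => IH x F (hfib x hx))
      fun x hx y hy => reflTransGen_crossLinked hm hmn hF
        (symm_apply_le_of_mem_ANBlock hx _ le_rfl) (symm_apply_le_of_mem_ANBlock hy _ le_rfl)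
  push Not at hfib
  obtain ⟨x₀, hx₀, hx₀F⟩ := hfib
  have hsub : {f ∈ F | f ∈ ANBlock m x₀} = {f ∈ F | f ∈ ANBlock (m + 1) v} :=
    eq_of_subset_of_card_le
      (monotone_filter_right _ fun _ _ hf => ANBlock_subset_of_mem hx₀ hf) (by omega)
  have hF₀ : ∀ f ∈ F, f ∈ ANBlock (m + 1) v → f.1 ⟨m, hmn⟩ = x₀.1 ⟨m, hmn⟩ := by
    intro f hf hfv
    have hf₀ : f ∈ {f ∈ F | f ∈ ANBlock m x₀} := hsub ▸ mem_filter.mpr ⟨hf, hfv⟩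
    exact ((mem_ANBlock_iff_of_mem_succ hmn hx₀).mp (mem_filter.mp hf₀).2).2
  refine ANBlockGraph_succ_preconnected_of_forall_apply_eq hm hmn hF₀ fun x hx hxc => IH x F ?_
  rw [filter_eq_empty_iff.mpr fun f hf hfx => hxc ?_, card_empty]
  · omega
  have hfx' := (mem_ANBlock_iff_of_mem_succ hmn hx).mp hfx
  exact hfx'.2 ▸ hF₀ f hf hfx'.1

end Induction

theorem ANBlockGraph_preconnected {m : ℕ} (hm : 3 ≤ m) (hmn : m ≤ n) (v : ANVertex n)
    (F : Finset (ANVertex n)) (hF : #{f ∈ F | f ∈ ANBlock m v} + 2 ≤ m) :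
    (ANBlockGraph m v F).Preconnected := by
  induction m, hm using Nat.le_induction generalizing v F with
  | base => exact ANBlockGraph_three_preconnected (by omega) v F
  | succ m hm IH =>
    exact ANBlockGraph_succ_preconnected hm (by omega) (fun x F hF => IH (by omega) x F hF) hF

theorem ANBlockGraph_succ_connected {m : ℕ} (hm : 5 ≤ m) (hmn : m < n) (v : ANVertex n)
    (F : Finset (ANVertex n)) (hF : ∀ k : Fin n, #{f ∈ F | f.1 ⟨m, hmn⟩ = k} ≤ m - 2) :
    (ANBlockGraph (m + 1) v F).Connected := by
  have hm3 : 3 ≤ m := by omega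
  have hlink : ∀ k l : Fin n, (v.1.symm k : ℕ) ≤ m → (v.1.symm l : ℕ) ≤ m → k ≠ l →
      CrossLinked hm3 hmn v F k l := fun k l hk hl hkl =>
    crossLinked_of_card_lt hm3 hmn hk hl hkl (by
      have := four_mul_pred_lt_factorial (t := m - 1) (by omega)
      have := hF k
      have := hF l
      omega)
  have hpre : (ANBlockGraph (m + 1) v F).Preconnected := by
    refine ANBlockGraph_succ_preconnected_of_fibers hm3 hmn (fun x hx => ?_) fun x hx y hy => ?_
    · have hsub : {f ∈ F | f ∈ ANBlock m x} ⊆ {f ∈ F | f.1 ⟨m, hmn⟩ = x.1 ⟨m, hmn⟩} :=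
        monotone_filter_right _ fun _ _ hf => ((mem_ANBlock_iff_of_mem_succ hmn hx).mp hf).2
      have := card_le_card hsub
      have := hF (x.1 ⟨m, hmn⟩)
      exact ANBlockGraph_preconnected hm3 hmn.le x F (by omega)
    · by_cases h : x.1 ⟨m, hmn⟩ = y.1 ⟨m, hmn⟩
      · exact h ▸ .refl
      · exact .single (hlink _ _ (symm_apply_le_of_mem_ANBlock hx _ le_rfl)
          (symm_apply_le_of_mem_ANBlock hy _ le_rfl) h)
  obtain ⟨p, hp, -⟩ := hlink (v.1 ⟨m, hmn⟩) (v.1 ⟨2, by omega⟩) (by simp) (by simp; omega)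
    (v.1.injective.ne (by simp [Fin.ext_iff]; omega))
  have : Nonempty (↑(ANBlock (m + 1) v \ F) : Set (ANVertex n)) := ⟨⟨p, hp⟩⟩
  exact ⟨hpre⟩

end AlternatingGroupNetwork

/-- For `n ≥ 6`, if every subnetwork `AN_n^i` contains at most `n − 3` vertices of
`F`, then `AN_n − F` is connected. -/
theorem AN_balanced_faults_connected (n : ℕ) (hn : 6 ≤ n) (F : Finset (ANVertex n))
    (hF : ∀ i : Fin n,
      (F.filter (fun x => x.1 ⟨n - 1, by omega⟩ = i)).card ≤ n - 3) :
    ((AN n).induce (↑F : Set (ANVertex n))ᶜ).Connected := by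
  obtain ⟨m, rfl⟩ : ∃ m, n = m + 1 := ⟨n - 1, by omega⟩
  let v : ANVertex (m + 1) := ⟨1, map_one _⟩
  have hall : ∀ p, p ∈ ANBlock (m + 1) v := fun p => mem_ANBlock.mpr fun j hj => by omega
  have hblock : (↑(ANBlock (m + 1) v \ F) : Set (ANVertex (m + 1))) = (↑F)ᶜ := by
    ext p
    simp [hall]
  rw [← hblock]
  exact ANBlockGraph_succ_connected (by omega) m.lt_succ_self v F (by simpa using hF)
end
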